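/- arXiv:2202.13575 — 8 statements merged into one kernel-verified Lean document; each statement's English description precedes it below -/
import Mathlib

section
/- Let δ, p, q, α be real numbers with 0<δ<1, 2≤p<q and q<α+1, let X>0, Y≥0, A>0 be reals, and define σ:(0,∞)→ℝ by σ(t)=X·t^{p−1−α}+Y·t^{q−1−α}−A·t^{−α−δ}. Then σ(t)→−∞ as t→0⁺ and σ(t)→0 as t→+∞. Moreover, if t_max>0 denotes the unique critical point of σ (the unique t with (α+1−p)·X·t^{p−1+δ}+(α+1−q)·Y·t^{q−1+δ}=(α+δ)·A), then σ(t)>0 for every t≥t_max; in particular σ(t_max)=sup_{t>0}σ(t)>0, and σ(t)>0 for all sufficiently large t. -/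
open Filter Set Topology

/-!
With `k = -α-δ < r = p-1-α`, `k < s = q-1-α` and `r, s < 0`, the fibering map is
`σ t = X t^r + Y t^s - A t^k = t^k (X t^(r-k) + Y t^(s-k) - A)`, whose bracket tends to `-A < 0`
at `0⁺`, while all three powers vanish at `+∞`. Its derivative is `t^(k-1) (c t - k A)`, where
`c t = r X t^(r-k) + s Y t^(s-k)` (`fiberingCrit`) is strictly decreasing, so `σ` increases up to
the critical point `T` and strictly decreases after it. A strictly decreasing function with limit `0` at `+∞` is
positive, hence `σ > 0` on `[T, ∞)`.
-/

lemma pos_of_strictAntiOn_Ici_of_tendsto_zero {f : ℝ → ℝ} {T t : ℝ}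
    (hf : StrictAntiOn f (Ici T)) (hlim : Tendsto f atTop (𝓝 0)) (ht : T ≤ t) : 0 < f t := by
  have hnonneg : 0 ≤ f (t + 1) :=
    le_of_tendsto hlim <| (eventually_ge_atTop (t + 1)).mono fun u hu =>
      hf.antitoneOn (show T ≤ t + 1 by linarith) (show T ≤ u by linarith) hu
  exact hnonneg.trans_lt (hf ht (show T ≤ t + 1 by linarith) (by linarith))

noncomputable def fibering (X Y A r s k t : ℝ) : ℝ := X * t ^ r + Y * t ^ s - A * t ^ k

noncomputable def fiberingCrit (X Y r s k t : ℝ) : ℝ := r * X * t ^ (r - k) + s * Y * t ^ (s - k)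

section Fibering

variable {X Y A r s k : ℝ}

lemma fibering_eq_rpow_mul {t : ℝ} (ht : 0 < t) :
    fibering X Y A r s k t = t ^ k * (X * t ^ (r - k) + Y * t ^ (s - k) - A) := by
  have hsplit : ∀ e : ℝ, t ^ e = t ^ k * t ^ (e - k) := fun e => by
    rw [← Real.rpow_add ht, add_sub_cancel]
  rw [fibering, hsplit r, hsplit s]
  ring

lemma tendsto_fibering_nhdsGT_zero (hkr : k < r) (hks : k < s) (hk : k < 0) (hA : 0 < A) :
    Tendsto (fibering X Y A r s k) (𝓝[>] 0) atBot := by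
  have hzero : ∀ e : ℝ, 0 < e → Tendsto (fun t : ℝ => t ^ e) (𝓝[>] 0) (𝓝 0) := fun e he => by
    simpa [Real.zero_rpow he.ne'] using
      (Real.continuousAt_rpow_const 0 e (Or.inr he.le)).tendsto.mono_left nhdsWithin_le_nhds
  have hbracket : Tendsto (fun t : ℝ => X * t ^ (r - k) + Y * t ^ (s - k) - A) (𝓝[>] 0)
      (𝓝 (-A)) := by
    simpa using (((hzero _ (sub_pos.2 hkr)).const_mul X).add
      ((hzero _ (sub_pos.2 hks)).const_mul Y)).sub_const A
  refine ((tendsto_rpow_neg_nhdsGT_zero hk).atTop_mul_neg (neg_lt_zero.2 hA) hbracket).congr' ?_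
  filter_upwards [self_mem_nhdsWithin] with t ht
  exact (fibering_eq_rpow_mul ht).symm

lemma tendsto_fibering_atTop (hr : r < 0) (hs : s < 0) (hk : k < 0) :
    Tendsto (fibering X Y A r s k) atTop (𝓝 0) := by
  have hzero : ∀ e : ℝ, e < 0 → Tendsto (fun t : ℝ => t ^ e) atTop (𝓝 0) := fun e he => by
    simpa using tendsto_rpow_neg_atTop (neg_pos.2 he)
  show Tendsto (fun t => X * t ^ r + Y * t ^ s - A * t ^ k) atTop (𝓝 0)
  simpa using (((hzero r hr).const_mul X).add ((hzero s hs).const_mul Y)).sub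
    ((hzero k hk).const_mul A)

lemma hasDerivAt_fibering {t : ℝ} (ht : 0 < t) :
    HasDerivAt (fibering X Y A r s k) (t ^ (k - 1) * (fiberingCrit X Y r s k t - k * A)) t := by
  have hd : ∀ e : ℝ, HasDerivAt (fun t : ℝ => t ^ e) (e * t ^ (e - 1)) t := fun e =>
    Real.hasDerivAt_rpow_const (Or.inl ht.ne')
  have hsplit : ∀ e : ℝ, t ^ (e - 1) = t ^ (k - 1) * t ^ (e - k) := fun e => by
    rw [← Real.rpow_add ht]
    ring_nf
  refine ((((hd r).const_mul X).add ((hd s).const_mul Y)).sub ((hd k).const_mul A)).congr_deriv ?_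
  rw [fiberingCrit, hsplit r, hsplit s]
  ring

lemma fiberingCrit_strictAntiOn (hX : 0 < X) (hY : 0 ≤ Y) (hr : r < 0) (hs : s < 0)
    (hkr : k < r) (hks : k < s) : StrictAntiOn (fiberingCrit X Y r s k) (Ici 0) := by
  intro u (hu : 0 ≤ u) v _ huv
  have hpow_r : u ^ (r - k) < v ^ (r - k) := Real.rpow_lt_rpow hu huv (sub_pos.2 hkr)
  have hpow_s : u ^ (s - k) ≤ v ^ (s - k) := Real.rpow_le_rpow hu huv.le (sub_pos.2 hks).le
  have hcoef_r : r * X < 0 := mul_neg_of_neg_of_pos hr hX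
  have hcoef_s : s * Y ≤ 0 := mul_nonpos_of_nonpos_of_nonneg hs.le hY
  simp only [fiberingCrit]
  nlinarith

variable {T : ℝ}

lemma strictMonoOn_fibering_Ioc (hT : fiberingCrit X Y r s k T = k * A)
    (hanti : StrictAntiOn (fiberingCrit X Y r s k) (Ici 0)) :
    StrictMonoOn (fibering X Y A r s k) (Ioc 0 T) := by
  refine strictMonoOn_of_deriv_pos (convex_Ioc 0 T)
    (fun t ht => (hasDerivAt_fibering ht.1).continuousAt.continuousWithinAt) fun t ht => ?_
  rw [interior_Ioc] at ht
  have hgt : k * A < fiberingCrit X Y r s k t :=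
    hT ▸ hanti (le_of_lt ht.1) (le_of_lt (ht.1.trans ht.2)) ht.2
  rw [(hasDerivAt_fibering ht.1).deriv]
  exact mul_pos (Real.rpow_pos_of_pos ht.1 _) (sub_pos.2 hgt)

lemma strictAntiOn_fibering_Ici (hT0 : 0 < T) (hT : fiberingCrit X Y r s k T = k * A)
    (hanti : StrictAntiOn (fiberingCrit X Y r s k) (Ici 0)) :
    StrictAntiOn (fibering X Y A r s k) (Ici T) := by
  refine strictAntiOn_of_deriv_neg (convex_Ici T)
    (fun t ht => (hasDerivAt_fibering (hT0.trans_le ht)).continuousAt.continuousWithinAt)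
    fun t ht => ?_
  rw [interior_Ici] at ht
  have ht0 : 0 < t := hT0.trans ht
  have hlt : fiberingCrit X Y r s k t < k * A := hT ▸ hanti hT0.le ht0.le ht
  rw [(hasDerivAt_fibering ht0).deriv]
  exact mul_neg_of_pos_of_neg (Real.rpow_pos_of_pos ht0 _) (sub_neg.2 hlt)

lemma isMaxOn_fibering (hT0 : 0 < T) (hT : fiberingCrit X Y r s k T = k * A)
    (hanti : StrictAntiOn (fiberingCrit X Y r s k) (Ici 0)) :
    IsMaxOn (fibering X Y A r s k) (Ioi 0) T := by
  intro t (ht : 0 < t)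
  rcases le_total t T with htT | hTt
  · exact (strictMonoOn_fibering_Ioc hT hanti).monotoneOn ⟨ht, htT⟩ ⟨hT0, le_rfl⟩ htT
  · exact (strictAntiOn_fibering_Ici hT0 hT hanti).antitoneOn self_mem_Ici hTt hTt

end Fibering

theorem statement2_general
    (δ p q α X Y A : ℝ)
    (hδ0 : 0 < δ)
    (hp : 2 ≤ p) (hpq : p < q) (hq : q < α + 1)
    (hX : 0 < X) (hY : 0 ≤ Y) (hA : 0 < A)
    (σ : ℝ → ℝ)
    (hσ : ∀ t : ℝ, σ t = X * t ^ (p - 1 - α) + Y * t ^ (q - 1 - α)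
        - A * t ^ (-α - δ)) :
    Tendsto σ (nhdsWithin 0 (Set.Ioi (0 : ℝ))) atBot ∧
    Tendsto σ atTop (nhds 0) ∧
    (∀ tmax : ℝ, 0 < tmax →
      (α + 1 - p) * X * tmax ^ (p - 1 + δ)
        + (α + 1 - q) * Y * tmax ^ (q - 1 + δ) = (α + δ) * A →
      (∀ t : ℝ, tmax ≤ t → 0 < σ t) ∧
      (0 < σ tmax ∧ ∀ t : ℝ, 0 < t → σ t ≤ σ tmax) ∧
      (∀ᶠ t : ℝ in atTop, 0 < σ t)) := by
  obtain rfl : σ = fibering X Y A (p - 1 - α) (q - 1 - α) (-α - δ) := funext hσ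
  have hr : p - 1 - α < 0 := by linarith
  have hs : q - 1 - α < 0 := by linarith
  have hkr : -α - δ < p - 1 - α := by linarith
  have hks : -α - δ < q - 1 - α := by linarith
  have hk : -α - δ < 0 := hkr.trans hr
  have hanti := fiberingCrit_strictAntiOn hX hY hr hs hkr hks
  have hlim := tendsto_fibering_atTop (X := X) (Y := Y) (A := A) hr hs hk
  refine ⟨tendsto_fibering_nhdsGT_zero hkr hks hk hA, hlim, fun T hT0 hT => ?_⟩
  have hTcrit : fiberingCrit X Y (p - 1 - α) (q - 1 - α) (-α - δ) T = (-α - δ) * A := by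
    rw [fiberingCrit, show p - 1 - α - (-α - δ) = p - 1 + δ by ring,
      show q - 1 - α - (-α - δ) = q - 1 + δ by ring]
    linarith
  have hpos : ∀ t, T ≤ t → 0 < fibering X Y A (p - 1 - α) (q - 1 - α) (-α - δ) t :=
    fun t => pos_of_strictAntiOn_Ici_of_tendsto_zero (strictAntiOn_fibering_Ici hT0 hTcrit hanti)
      hlim
  exact ⟨hpos, ⟨hpos T le_rfl, fun t ht => isMaxOn_fibering hT0 hTcrit hanti ht⟩,
    (eventually_ge_atTop T).mono hpos⟩

/-- the fibering function
`σ(t) = X·t^{p−1−α} + Y·t^{q−1−α} − A·t^{−α−δ}` tends to `−∞` as `t → 0⁺` and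
to `0` as `t → +∞`; moreover, if `t_max > 0` is the unique critical point of
`σ` (i.e. `(α+1−p)·X·t_max^{p−1+δ} + (α+1−q)·Y·t_max^{q−1+δ} = (α+δ)·A`),
then `σ(t) > 0` for every `t ≥ t_max`; in particular `σ(t_max)` is the
supremum of `σ` over `(0,∞)`, it is positive, and `σ(t) > 0` for all
sufficiently large `t`. -/
theorem statement2
    (δ p q α X Y A : ℝ)
    (hδ0 : 0 < δ) (hδ1 : δ < 1)
    (hp : 2 ≤ p) (hpq : p < q) (hq : q < α + 1)
    (hX : 0 < X) (hY : 0 ≤ Y) (hA : 0 < A)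
    (σ : ℝ → ℝ)
    (hσ : ∀ t : ℝ, σ t = X * t ^ (p - 1 - α) + Y * t ^ (q - 1 - α)
        - A * t ^ (-α - δ)) :
    Tendsto σ (nhdsWithin 0 (Set.Ioi (0 : ℝ))) atBot ∧
    Tendsto σ atTop (nhds 0) ∧
    (∀ tmax : ℝ, 0 < tmax →
      (α + 1 - p) * X * tmax ^ (p - 1 + δ)
        + (α + 1 - q) * Y * tmax ^ (q - 1 + δ) = (α + δ) * A →
      (∀ t : ℝ, tmax ≤ t → 0 < σ t) ∧
      (0 < σ tmax ∧ ∀ t : ℝ, 0 < t → σ t ≤ σ tmax) ∧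
      (∀ᶠ t : ℝ in atTop, 0 < σ t)) :=
  statement2_general δ p q α X Y A hδ0 hp hpq hq hX hY hA σ hσ
end

section
/- Let δ, p, q, α be real numbers with 0<δ<1, 2≤p<q and q<α+1, let X>0, Y≥0, A>0 be reals, define σ:(0,∞)→ℝ by σ(t)=X·t^{p−1−α}+Y·t^{q−1−α}−A·t^{−α−δ}, and let t_max>0 be the unique critical point of σ. Then σ(t_max) ≥ ((α+1−p)/(α+δ))^{(α+δ)/(p−1+δ)} · ((p−1+δ)/(α+1−p)) · X^{(α+δ)/(p−1+δ)} · A^{−(α+1−p)/(p−1+δ)} > 0. -/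
/-!
At a critical point `t` of `σ`, the critical equation eliminates the singular term:
`(α + δ) σ(t) = (p - 1 + δ) X t^{p-1-α} + (q - 1 + δ) Y t^{q-1-α} ≥ (p - 1 + δ) X t^{p-1-α}`.
Dropping the `Y`-term from the critical equation also gives `t ≤ t₀`, where `t₀` is the maximizer
of `σ̃(t) = X t^{p-1-α} - A t^{-α-δ}`, i.e. `t₀^{p-1+δ} = (α + δ) A / ((α + 1 - p) X)`. Since
`t^{p-1-α}` is decreasing, `σ(t) ≥ (p - 1 + δ)/(α + δ) · X t₀^{p-1-α} = σ̃(t₀)`, which is the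
stated constant.
-/

lemma mul_fibering_eq_of_critical {δ p q α X Y A t : ℝ} (ht : 0 < t)
    (hcrit : (α + 1 - p) * X * t ^ (p - 1 + δ) + (α + 1 - q) * Y * t ^ (q - 1 + δ)
      = (α + δ) * A) :
    (α + δ) * (X * t ^ (p - 1 - α) + Y * t ^ (q - 1 - α) - A * t ^ (-α - δ))
      = (p - 1 + δ) * X * t ^ (p - 1 - α) + (q - 1 + δ) * Y * t ^ (q - 1 - α) := by
  have hp : t ^ (p - 1 + δ) * t ^ (-α - δ) = t ^ (p - 1 - α) := by
    rw [← Real.rpow_add ht]; ring_nf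
  have hq : t ^ (q - 1 + δ) * t ^ (-α - δ) = t ^ (q - 1 - α) := by
    rw [← Real.rpow_add ht]; ring_nf
  linear_combination t ^ (-α - δ) * hcrit - (α + 1 - p) * X * hp - (α + 1 - q) * Y * hq

lemma le_fibering_of_critical {δ p q α X Y A t : ℝ} (ht : 0 < t) (hY : 0 ≤ Y)
    (hd : 0 < α + δ) (hq : 0 ≤ q - 1 + δ)
    (hcrit : (α + 1 - p) * X * t ^ (p - 1 + δ) + (α + 1 - q) * Y * t ^ (q - 1 + δ)
      = (α + δ) * A) :
    (p - 1 + δ) / (α + δ) * X * t ^ (p - 1 - α)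
      ≤ X * t ^ (p - 1 - α) + Y * t ^ (q - 1 - α) - A * t ^ (-α - δ) := by
  have hY' : 0 ≤ (q - 1 + δ) * Y * t ^ (q - 1 - α) := by positivity
  rw [div_mul_eq_mul_div, div_mul_eq_mul_div, div_le_iff₀ hd, mul_comm _ (α + δ),
    mul_fibering_eq_of_critical ht hcrit]
  linarith

lemma rpow_neg_div_le_of_rpow_le {t B s c : ℝ} (ht : 0 < t) (hs : 0 < s) (hc : 0 ≤ c)
    (h : t ^ s ≤ B) : B ^ (-c / s) ≤ t ^ (-c) := by
  have ht' : t ^ (-c) = (t ^ s) ^ (-c / s) := by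
    rw [← Real.rpow_mul ht.le, mul_div_cancel₀ _ hs.ne']
  rw [ht']
  exact Real.rpow_le_rpow_of_nonpos (by positivity) h (div_nonpos_of_nonpos_of_nonneg
    (neg_nonpos.mpr hc) hs.le)

lemma const_eq_mul_rpow_neg_div {c s d X A : ℝ} (hc : 0 < c) (hs : 0 < s) (hX : 0 < X)
    (hA : 0 < A) (hd : d = c + s) :
    (c / d) ^ (d / s) * (s / c) * X ^ (d / s) * A ^ (-c / s)
      = s / d * X * (d * A / (c * X)) ^ (-c / s) := by
  subst hd
  have hexp : (c + s) / s = c / s + 1 := by field_simp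
  have hB : 0 < (c + s) * A / (c * X) := by positivity
  rw [hexp, neg_div, Real.rpow_neg hB.le, Real.rpow_neg hA.le,
    Real.rpow_add_one (div_pos hc (by positivity)).ne', Real.rpow_add_one hX.ne',
    Real.div_rpow hc.le (by positivity), Real.div_rpow (by positivity) (by positivity),
    Real.mul_rpow (by positivity) hA.le, Real.mul_rpow hc.le hX.le]
  field_simp

theorem statement4_general
    (δ p q α X Y A : ℝ)
    (hδ0 : 0 < δ)
    (hp : 2 ≤ p) (hpq : p < q) (hq : q < α + 1)
    (hX : 0 < X) (hY : 0 ≤ Y) (hA : 0 < A)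
    (σ : ℝ → ℝ)
    (hσ : ∀ t : ℝ, σ t = X * t ^ (p - 1 - α) + Y * t ^ (q - 1 - α)
        - A * t ^ (-α - δ))
    (tmax : ℝ) (htmax : 0 < tmax)
    (heq : (α + 1 - p) * X * tmax ^ (p - 1 + δ)
        + (α + 1 - q) * Y * tmax ^ (q - 1 + δ) = (α + δ) * A) :
    ((α + 1 - p) / (α + δ)) ^ ((α + δ) / (p - 1 + δ))
        * ((p - 1 + δ) / (α + 1 - p))
        * X ^ ((α + δ) / (p - 1 + δ))
        * A ^ (-(α + 1 - p) / (p - 1 + δ)) ≤ σ tmax ∧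
    0 < ((α + 1 - p) / (α + δ)) ^ ((α + δ) / (p - 1 + δ))
        * ((p - 1 + δ) / (α + 1 - p))
        * X ^ ((α + δ) / (p - 1 + δ))
        * A ^ (-(α + 1 - p) / (p - 1 + δ)) := by
  have hc : 0 < α + 1 - p := by linarith
  have hs : 0 < p - 1 + δ := by linarith
  have hd : 0 < α + δ := by linarith
  have htmax_le : tmax ^ (p - 1 + δ) ≤ (α + δ) * A / ((α + 1 - p) * X) := by
    have hYterm : 0 ≤ (α + 1 - q) * Y * tmax ^ (q - 1 + δ) := by
      have : 0 ≤ α + 1 - q := by linarith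
      positivity
    rw [le_div_iff₀ (by positivity)]
    linarith
  rw [const_eq_mul_rpow_neg_div hc hs hX hA (by ring)]
  refine ⟨?_, by positivity⟩
  calc (p - 1 + δ) / (α + δ) * X
          * ((α + δ) * A / ((α + 1 - p) * X)) ^ (-(α + 1 - p) / (p - 1 + δ))
      ≤ (p - 1 + δ) / (α + δ) * X * tmax ^ (p - 1 - α) := by
        rw [show p - 1 - α = -(α + 1 - p) by ring]
        gcongr
        exact rpow_neg_div_le_of_rpow_le htmax hs hc.le htmax_le
    _ ≤ σ tmax := by
        rw [hσ]
        exact le_fibering_of_critical htmax hY hd (by linarith) heq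

/-- the value of the fibering function
`σ(t) = X·t^{p−1−α} + Y·t^{q−1−α} − A·t^{−α−δ}` at its unique critical point
`t_max` (the unique `t > 0` with
`(α+1−p)·X·t^{p−1+δ} + (α+1−q)·Y·t^{q−1+δ} = (α+δ)·A`) satisfies
`σ(t_max) ≥ ((α+1−p)/(α+δ))^{(α+δ)/(p−1+δ)}·((p−1+δ)/(α+1−p))·
X^{(α+δ)/(p−1+δ)}·A^{−(α+1−p)/(p−1+δ)} > 0`. -/
theorem statement4
    (δ p q α X Y A : ℝ)
    (hδ0 : 0 < δ) (hδ1 : δ < 1)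
    (hp : 2 ≤ p) (hpq : p < q) (hq : q < α + 1)
    (hX : 0 < X) (hY : 0 ≤ Y) (hA : 0 < A)
    (σ : ℝ → ℝ)
    (hσ : ∀ t : ℝ, σ t = X * t ^ (p - 1 - α) + Y * t ^ (q - 1 - α)
        - A * t ^ (-α - δ))
    (tmax : ℝ) (htmax : 0 < tmax)
    (heq : (α + 1 - p) * X * tmax ^ (p - 1 + δ)
        + (α + 1 - q) * Y * tmax ^ (q - 1 + δ) = (α + δ) * A) :
    ((α + 1 - p) / (α + δ)) ^ ((α + δ) / (p - 1 + δ))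
        * ((p - 1 + δ) / (α + 1 - p))
        * X ^ ((α + δ) / (p - 1 + δ))
        * A ^ (-(α + 1 - p) / (p - 1 + δ)) ≤ σ tmax ∧
    0 < ((α + 1 - p) / (α + δ)) ^ ((α + δ) / (p - 1 + δ))
        * ((p - 1 + δ) / (α + 1 - p))
        * X ^ ((α + δ) / (p - 1 + δ))
        * A ^ (-(α + 1 - p) / (p - 1 + δ)) :=
  statement4_general δ p q α X Y A hδ0 hp hpq hq hX hY hA σ hσ tmax htmax heq
end

section
/- Let δ, p, q, α be real numbers with 0<δ<1, 2≤p<q and q<α+1. Let X>0, Y≥0, A>0, m>0, and constants c′>0, K_a>0, K_b>0 be reals such that X ≥ c′·m^p, A ≤ K_a·m^{1−δ}, and let B be a real with B ≤ K_b·m^{α+1}. Define σ(t)=X·t^{p−1−α}+Y·t^{q−1−α}−A·t^{−α−δ} for t>0, let t_max be the unique critical point of σ, and set D₁ = ((α+1−p)/(α+δ))^{(α+δ)/(p−1+δ)} · ((p−1+δ)/(α+1−p)) · (c′)^{(α+δ)/(p−1+δ)} · K_a^{−(α+1−p)/(p−1+δ)}. Then for every λ>0, σ(t_max) − λ·B ≥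 (D₁ − λ·K_b)·m^{α+1}. In particular, for every λ with 0<λ<D₁/K_b one has λ·B < σ(t_max). -/
/-!
At a critical point `t` of `σ`, multiplying the critical-point equation by `t ^ (-α - δ)`
eliminates `A` and gives `(α + δ) σ(t) ≥ (p - 1 + δ) X t ^ (p - 1 - α)`; dropping the `Y`-term
from the same equation bounds `t ^ (p - 1 + δ)` by `(α + δ) A / ((α + 1 - p) X)`. Since
`p - 1 - α < 0`, together these bound `σ(t)` below by a constant times
`X ^ ((α + δ) / (p - 1 + δ)) * A ^ (-(α + 1 - p) / (p - 1 + δ))`, with no `t` left. The bounds on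
`X` and `A` in terms of `m` then give `D₁ m ^ (α + 1)`, the exponents of `m` adding up to `α + 1`.
-/

open Real

lemma le_mul_rpow_neg_of_mul_rpow_le {s γ β X A t : ℝ} (hs : 0 < s) (hγ : 0 < γ)
    (hβ : s + γ = β) (hX : 0 < X) (hA : 0 < A) (ht : 0 < t)
    (h : γ * X * t ^ s ≤ β * A) :
    s / γ * (γ / β) ^ (β / s) * X ^ (β / s) * A ^ (-γ / s) ≤ s / β * (X * t ^ (-γ)) := by
  have hβ0 : 0 < β := by linarith
  have hts : t ^ s ≤ β * A / (γ * X) := by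
    rw [le_div_iff₀ (by positivity)]; linarith
  have hpow : (β * A / (γ * X)) ^ (-γ / s) ≤ t ^ (-γ) := by
    calc (β * A / (γ * X)) ^ (-γ / s)
        ≤ (t ^ s) ^ (-γ / s) :=
          rpow_le_rpow_of_nonpos (by positivity) hts
            (div_nonpos_of_nonpos_of_nonneg (by linarith) hs.le)
      _ = t ^ (-γ) := by rw [← rpow_mul ht.le]; congr 1; field_simp
  have hexp : β / s = 1 + γ / s := by field_simp; linarith
  have hsplit : (β * A / (γ * X)) ^ (-γ / s)
      = (γ / β) ^ (γ / s) * X ^ (γ / s) * A ^ (-γ / s) := by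
    rw [neg_div, rpow_neg (by positivity), ← inv_rpow (by positivity), inv_div,
      div_rpow (by positivity) (by positivity), mul_rpow hγ.le hX.le, mul_rpow hβ0.le hA.le,
      rpow_neg hA.le, div_rpow hγ.le hβ0.le]
    field_simp
  calc s / γ * (γ / β) ^ (β / s) * X ^ (β / s) * A ^ (-γ / s)
      = s / β * (X * ((γ / β) ^ (γ / s) * X ^ (γ / s) * A ^ (-γ / s))) := by
        rw [hexp, rpow_add (by positivity), rpow_add hX, rpow_one, rpow_one]
        field_simp
    _ ≤ s / β * (X * t ^ (-γ)) := by
        rw [← hsplit]; gcongr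

lemma fiber_critical_value_ge {δ p q α X Y A t : ℝ} (hs : 0 < p - 1 + δ) (hpq : p ≤ q)
    (hqα : q < α + 1) (hX : 0 < X) (hY : 0 ≤ Y) (hA : 0 < A) (ht : 0 < t)
    (heq : (α + 1 - p) * X * t ^ (p - 1 + δ) + (α + 1 - q) * Y * t ^ (q - 1 + δ)
      = (α + δ) * A) :
    (p - 1 + δ) / (α + 1 - p) * ((α + 1 - p) / (α + δ)) ^ ((α + δ) / (p - 1 + δ))
        * X ^ ((α + δ) / (p - 1 + δ)) * A ^ (-(α + 1 - p) / (p - 1 + δ))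
      ≤ X * t ^ (p - 1 - α) + Y * t ^ (q - 1 - α) - A * t ^ (-α - δ) := by
  have hYterm : 0 ≤ (α + 1 - q) * Y * t ^ (q - 1 + δ) := by
    have : 0 ≤ α + 1 - q := by linarith
    positivity
  have hT1 : t ^ (p - 1 + δ) * t ^ (-α - δ) = t ^ (p - 1 - α) := by
    rw [← rpow_add ht]; ring_nf
  have hT2 : t ^ (q - 1 + δ) * t ^ (-α - δ) = t ^ (q - 1 - α) := by
    rw [← rpow_add ht]; ring_nf
  have hvalue : (α + δ) * (X * t ^ (p - 1 - α) + Y * t ^ (q - 1 - α) - A * t ^ (-α - δ))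
      = (p - 1 + δ) * (X * t ^ (p - 1 - α)) + (q - 1 + δ) * (Y * t ^ (q - 1 - α)) := by
    linear_combination t ^ (-α - δ) * heq - (α + 1 - p) * X * hT1 - (α + 1 - q) * Y * hT2
  have hβ : 0 < α + δ := by linarith
  have hlower : (p - 1 + δ) / (α + δ) * (X * t ^ (p - 1 - α))
      ≤ X * t ^ (p - 1 - α) + Y * t ^ (q - 1 - α) - A * t ^ (-α - δ) := by
    have : 0 ≤ (q - 1 + δ) * (Y * t ^ (q - 1 - α)) := by
      have : 0 ≤ q - 1 + δ := by linarith
      positivity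
    rw [div_mul_eq_mul_div, div_le_iff₀ hβ]
    linarith
  refine le_trans ?_ hlower
  rw [show p - 1 - α = -(α + 1 - p) by ring]
  exact le_mul_rpow_neg_of_mul_rpow_le hs (by linarith) (by ring) hX hA ht (by linarith)

lemma mul_rpow_le_rpow_mul_rpow {X A c K m a b e f : ℝ} (hc : 0 < c) (hK : 0 < K)
    (hA : 0 < A) (hm : 0 < m) (hX : c * m ^ a ≤ X) (hAK : A ≤ K * m ^ b)
    (he : 0 ≤ e) (hf : f ≤ 0) :
    c ^ e * K ^ f * m ^ (a * e + b * f) ≤ X ^ e * A ^ f := by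
  have hX0 : 0 < X := lt_of_lt_of_le (by positivity) hX
  calc c ^ e * K ^ f * m ^ (a * e + b * f)
      = (c * m ^ a) ^ e * (K * m ^ b) ^ f := by
        rw [mul_rpow hc.le (by positivity), mul_rpow hK.le (by positivity),
          ← rpow_mul hm.le, ← rpow_mul hm.le, rpow_add hm]
        ring
    _ ≤ X ^ e * A ^ f :=
        mul_le_mul (rpow_le_rpow (by positivity) hX he)
          (rpow_le_rpow_of_nonpos hA hAK hf) (by positivity) (by positivity)

theorem statement5_general
    (δ p q α X Y A B m c' Ka Kb : ℝ)
    (hδ0 : 0 < δ)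
    (hp : 2 ≤ p) (hpq : p < q) (hq : q < α + 1)
    (hX : 0 < X) (hY : 0 ≤ Y) (hA : 0 < A) (hm : 0 < m)
    (hc' : 0 < c') (hKa : 0 < Ka) (hKb : 0 < Kb)
    (hXm : c' * m ^ p ≤ X)
    (hAm : A ≤ Ka * m ^ (1 - δ))
    (hBm : B ≤ Kb * m ^ (α + 1))
    (σ : ℝ → ℝ)
    (hσ : ∀ t : ℝ, σ t = X * t ^ (p - 1 - α) + Y * t ^ (q - 1 - α)
        - A * t ^ (-α - δ))
    (tmax : ℝ) (htmax : 0 < tmax)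
    (heq : (α + 1 - p) * X * tmax ^ (p - 1 + δ)
        + (α + 1 - q) * Y * tmax ^ (q - 1 + δ) = (α + δ) * A)
    (D₁ : ℝ)
    (hD₁ : D₁ = ((α + 1 - p) / (α + δ)) ^ ((α + δ) / (p - 1 + δ))
        * ((p - 1 + δ) / (α + 1 - p))
        * c' ^ ((α + δ) / (p - 1 + δ))
        * Ka ^ (-(α + 1 - p) / (p - 1 + δ))) :
    (∀ lam : ℝ, 0 < lam →
      (D₁ - lam * Kb) * m ^ (α + 1) ≤ σ tmax - lam * B) ∧
    (∀ lam : ℝ, 0 < lam → lam < D₁ / Kb → lam * B < σ tmax) := by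
  have hs : 0 < p - 1 + δ := by linarith
  have hγ : 0 < α + 1 - p := by linarith
  have hβ : 0 < α + δ := by linarith
  have hexp : p * ((α + δ) / (p - 1 + δ)) + (1 - δ) * (-(α + 1 - p) / (p - 1 + δ)) = α + 1 := by
    field_simp; ring
  have hsobolev := mul_rpow_le_rpow_mul_rpow hc' hKa hA hm hXm hAm
    (div_nonneg hβ.le hs.le) (div_nonpos_of_nonpos_of_nonneg (neg_nonpos.mpr hγ.le) hs.le)
  rw [hexp] at hsobolev
  have hcrit := fiber_critical_value_ge hs hpq.le hq hX hY hA htmax heq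
  have hσm : D₁ * m ^ (α + 1) ≤ σ tmax := by
    rw [hσ, hD₁]
    refine le_trans ?_ hcrit
    calc _ = (p - 1 + δ) / (α + 1 - p) * ((α + 1 - p) / (α + δ)) ^ ((α + δ) / (p - 1 + δ))
          * (c' ^ ((α + δ) / (p - 1 + δ)) * Ka ^ (-(α + 1 - p) / (p - 1 + δ)) * m ^ (α + 1)) := by
          ring
      _ ≤ _ := by rw [mul_assoc _ (X ^ _)]; gcongr
  have hlamB (lam : ℝ) (hlam : 0 < lam) : lam * B ≤ lam * Kb * m ^ (α + 1) := by
    rw [mul_assoc]; exact mul_le_mul_of_nonneg_left hBm hlam.le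
  refine ⟨fun lam hlam => ?_, fun lam hlam hlamD => ?_⟩
  · linarith [hlamB lam hlam]
  · have : lam * Kb * m ^ (α + 1) < D₁ * m ^ (α + 1) :=
      mul_lt_mul_of_pos_right ((lt_div_iff₀ hKb).mp hlamD) (by positivity)
    linarith [hlamB lam hlam]

/-- the uniform positivity estimate
`σ(t_max) − λ·B ≥ (D₁ − λ·K_b)·m^{α+1}`, where
`D₁ = ((α+1−p)/(α+δ))^{(α+δ)/(p−1+δ)}·((p−1+δ)/(α+1−p))·
(c′)^{(α+δ)/(p−1+δ)}·K_a^{−(α+1−p)/(p−1+δ)}`, under the Sobolev/Hölder-type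
hypotheses `X ≥ c′·m^p`, `A ≤ K_a·m^{1−δ}`, `B ≤ K_b·m^{α+1}`.  In
particular, `λ·B < σ(t_max)` for every `0 < λ < D₁/K_b`. -/
theorem statement5
    (δ p q α X Y A B m c' Ka Kb : ℝ)
    (hδ0 : 0 < δ) (hδ1 : δ < 1)
    (hp : 2 ≤ p) (hpq : p < q) (hq : q < α + 1)
    (hX : 0 < X) (hY : 0 ≤ Y) (hA : 0 < A) (hm : 0 < m)
    (hc' : 0 < c') (hKa : 0 < Ka) (hKb : 0 < Kb)
    (hXm : c' * m ^ p ≤ X)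
    (hAm : A ≤ Ka * m ^ (1 - δ))
    (hBm : B ≤ Kb * m ^ (α + 1))
    (σ : ℝ → ℝ)
    (hσ : ∀ t : ℝ, σ t = X * t ^ (p - 1 - α) + Y * t ^ (q - 1 - α)
        - A * t ^ (-α - δ))
    (tmax : ℝ) (htmax : 0 < tmax)
    (heq : (α + 1 - p) * X * tmax ^ (p - 1 + δ)
        + (α + 1 - q) * Y * tmax ^ (q - 1 + δ) = (α + δ) * A)
    (D₁ : ℝ)
    (hD₁ : D₁ = ((α + 1 - p) / (α + δ)) ^ ((α + δ) / (p - 1 + δ))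
        * ((p - 1 + δ) / (α + 1 - p))
        * c' ^ ((α + δ) / (p - 1 + δ))
        * Ka ^ (-(α + 1 - p) / (p - 1 + δ))) :
    (∀ lam : ℝ, 0 < lam →
      (D₁ - lam * Kb) * m ^ (α + 1) ≤ σ tmax - lam * B) ∧
    (∀ lam : ℝ, 0 < lam → lam < D₁ / Kb → lam * B < σ tmax) :=
  statement5_general δ p q α X Y A B m c' Ka Kb hδ0 hp hpq hq hX hY hA hm hc' hKa hKb hXm hAm hBm σ
    hσ tmax htmax heq D₁ hD₁
end

section
/- Let δ, p, q, α be real numbers with 0<δ<1, 2≤p<q and q<α+1, let X>0, Y≥0, A>0, λ>0 be reals and let B<0. Define σ(t)=X·t^{p−1−α}+Y·t^{q−1−α}−A·t^{−α−δ} and φ(t)=(X/p)·t^p+(Y/q)·t^q−(A/(1−δ))·t^{1−δ}−(λB/(α+1))·t^{α+1} for t>0, and let t_max be the unique critical point of σ. Then there exists a unique t₁>0 with σ(t₁)=λ·B; moreover t₁<t_max and σ′(t₁)>0. Consequently t₁ is the unique critical point of φ on (0,∞), φ″(t₁)>0, and φ(t₁)=inf_{t>0}φ(t), i.e. φ attains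 its global minimum over (0,∞) at t₁. -/
open Filter Set Topology

/-!
Writing `φ′(t) = t^α (σ(t) − λB)`, everything reduces to the shape of `σ`. Its derivative is
`t^{−α−δ−1}((α+δ)A − ρ(t))` with `ρ` strictly increasing and `ρ(t_max) = (α+δ)A`, so `σ` increases
on `(0, t_max]` and decreases on `[t_max, ∞)`. Since `σ → −∞` at `0⁺` and `σ → 0` at `∞`, `σ` is
nonnegative on `[t_max, ∞)`, so the negative level `λB` is attained exactly once, at some
`t₁ < t_max`. Hence `φ′` changes sign from negative to positive exactly at `t₁`, and
`φ″(t₁) = t₁^α σ′(t₁) > 0`.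
-/

theorem AntitoneOn.le_of_tendsto_atTop {f : ℝ → ℝ} {m l t : ℝ} (hf : AntitoneOn f (Ici m))
    (hl : Tendsto f atTop (𝓝 l)) (ht : m ≤ t) : l ≤ f t :=
  le_of_tendsto hl ((eventually_ge_atTop t).mono fun _ hs => hf ht (ht.trans hs) hs)

section LevelSet

variable {f : ℝ → ℝ} {m c t₁ t : ℝ}

theorem lt_of_apply_eq_neg (hnonneg : ∀ t, m ≤ t → 0 ≤ f t) (hc : c < 0) (h : f t₁ = c) :
    t₁ < m :=
  not_le.mp fun hm => (hnonneg t₁ hm).not_gt (h ▸ hc)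

theorem exists_pos_apply_eq (hm : 0 < m) (hcont : ContinuousOn f (Ioi 0))
    (hbot : Tendsto f (𝓝[>] 0) atBot) (hnonneg : ∀ t, m ≤ t → 0 ≤ f t) (hc : c < 0) :
    ∃ t, 0 < t ∧ f t = c := by
  obtain ⟨t₀, ht₀c, ht₀⟩ :=
    ((hbot.eventually (eventually_lt_atBot c)).and self_mem_nhdsWithin).exists
  exact isPreconnected_Ioi.intermediate_value ht₀ (mem_Ioi.2 hm) hcont
    ⟨ht₀c.le, hc.le.trans (hnonneg m le_rfl)⟩

theorem StrictMonoOn.eq_of_apply_eq_neg (hmono : StrictMonoOn f (Ioc 0 m))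
    (hnonneg : ∀ t, m ≤ t → 0 ≤ f t) (hc : c < 0) (ht₁ : 0 < t₁) (h₁ : f t₁ = c)
    (ht : 0 < t) (h : f t = c) : t = t₁ :=
  hmono.injOn ⟨ht, (lt_of_apply_eq_neg hnonneg hc h).le⟩
    ⟨ht₁, (lt_of_apply_eq_neg hnonneg hc h₁).le⟩ (h.trans h₁.symm)

theorem StrictMonoOn.apply_lt_of_lt_of_apply_eq_neg (hmono : StrictMonoOn f (Ioc 0 m))
    (hnonneg : ∀ t, m ≤ t → 0 ≤ f t) (hc : c < 0) (ht₁ : 0 < t₁) (h₁ : f t₁ = c)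
    (ht : 0 < t) (htt : t < t₁) : f t < c :=
  h₁ ▸ hmono ⟨ht, (htt.trans (lt_of_apply_eq_neg hnonneg hc h₁)).le⟩
    ⟨ht₁, (lt_of_apply_eq_neg hnonneg hc h₁).le⟩ htt

theorem StrictMonoOn.lt_apply_of_lt_of_apply_eq_neg (hmono : StrictMonoOn f (Ioc 0 m))
    (hnonneg : ∀ t, m ≤ t → 0 ≤ f t) (hc : c < 0) (ht₁ : 0 < t₁) (h₁ : f t₁ = c)
    (htt : t₁ < t) : c < f t := by
  rcases le_or_gt t m with htm | htm
  · exact h₁ ▸ hmono ⟨ht₁, htt.le.trans htm⟩ ⟨ht₁.trans htt, htm⟩ htt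
  · exact hc.trans_le (hnonneg t htm.le)

end LevelSet

theorem le_of_hasDerivAt_neg_of_pos {φ φ' : ℝ → ℝ} {t₁ t : ℝ} (ht₁ : 0 < t₁)
    (hφ : ∀ t, 0 < t → HasDerivAt φ (φ' t) t) (hneg : ∀ t, 0 < t → t < t₁ → φ' t < 0)
    (hpos : ∀ t, t₁ < t → 0 < φ' t) (ht : 0 < t) : φ t₁ ≤ φ t := by
  have hcont : ContinuousOn φ (Ioi 0) := fun s hs => (hφ s hs).continuousAt.continuousWithinAt
  rcases le_total t t₁ with htt | htt
  · refine (strictAntiOn_of_deriv_neg (convex_Ioc 0 t₁) (hcont.mono Ioc_subset_Ioi_self)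
      fun s hs => ?_).antitoneOn ⟨ht, htt⟩ ⟨ht₁, le_rfl⟩ htt
    rw [interior_Ioc] at hs
    exact (hφ s hs.1).deriv ▸ hneg s hs.1 hs.2
  · refine (strictMonoOn_of_deriv_pos (convex_Ici t₁) (hcont.mono fun s hs => ht₁.trans_le hs)
      fun s hs => ?_).monotoneOn self_mem_Ici htt htt
    rw [interior_Ici] at hs
    exact (hφ s (ht₁.trans hs)).deriv ▸ hpos s hs

theorem hasDerivAt_deriv_of_hasDerivAt_mul_sub {φ w g : ℝ → ℝ} {c t₁ w' g' : ℝ}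
    (hφ : ∀ᶠ t in 𝓝 t₁, HasDerivAt φ (w t * (g t - c)) t) (hw : HasDerivAt w w' t₁)
    (hg : HasDerivAt g g' t₁) (h : g t₁ = c) : HasDerivAt (deriv φ) (w t₁ * g') t₁ := by
  simpa only [h, sub_self, mul_zero, zero_add] using
    (hw.mul (hg.sub_const c)).congr_of_eventuallyEq (hφ.mono fun t ht => ht.deriv)

theorem rpow_eq_mul_rpow_of_add {t a b c : ℝ} (ht : 0 < t) (h : b + c = a) :
    t ^ a = t ^ b * t ^ c := by
  rw [← h, Real.rpow_add ht]

theorem hasDerivAt_div_mul_rpow (a : ℝ) {r t : ℝ} (hr : r ≠ 0) (ht : 0 < t) :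
    HasDerivAt (fun s => a / r * s ^ r) (a * t ^ (r - 1)) t :=
  ((Real.hasDerivAt_rpow_const (Or.inl ht.ne')).const_mul (a / r)).congr_deriv (by field_simp)

noncomputable section

namespace Fibering

variable (X Y A p q α δ : ℝ)

def sigma (t : ℝ) : ℝ := X * t ^ (p - 1 - α) + Y * t ^ (q - 1 - α) - A * t ^ (-α - δ)

/-- `c` stands for `λB`. -/
def phi (c t : ℝ) : ℝ :=
  X / p * t ^ p + Y / q * t ^ q - A / (1 - δ) * t ^ (1 - δ) - c / (α + 1) * t ^ (α + 1)

/-- The left-hand side of the equation defining `t_max`. -/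
def rho (t : ℝ) : ℝ := (α + 1 - p) * X * t ^ (p - 1 + δ) + (α + 1 - q) * Y * t ^ (q - 1 + δ)

variable {X Y A p q α δ} {tmax t : ℝ}

theorem sigma_eq_rpow_mul (ht : 0 < t) :
    sigma X Y A p q α δ t = t ^ (-α - δ) * (X * t ^ (p - 1 + δ) + Y * t ^ (q - 1 + δ) - A) := by
  rw [sigma, rpow_eq_mul_rpow_of_add ht (show -α - δ + (p - 1 + δ) = p - 1 - α by ring),
    rpow_eq_mul_rpow_of_add ht (show -α - δ + (q - 1 + δ) = q - 1 - α by ring)]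
  ring

theorem hasDerivAt_sigma (ht : 0 < t) :
    HasDerivAt (sigma X Y A p q α δ)
      (t ^ (-α - δ - 1) * ((α + δ) * A - rho X Y p q α δ t)) t := by
  have hpow (r : ℝ) : HasDerivAt (fun s => s ^ r) (r * t ^ (r - 1)) t :=
    Real.hasDerivAt_rpow_const (Or.inl ht.ne')
  refine ((((hpow _).const_mul X).add ((hpow _).const_mul Y)).sub
    ((hpow _).const_mul A)).congr_deriv ?_
  rw [rho, rpow_eq_mul_rpow_of_add ht (show -α - δ - 1 + (p - 1 + δ) = p - 1 - α - 1 by ring),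
    rpow_eq_mul_rpow_of_add ht (show -α - δ - 1 + (q - 1 + δ) = q - 1 - α - 1 by ring)]
  ring

theorem continuousOn_sigma : ContinuousOn (sigma X Y A p q α δ) (Ioi 0) :=
  fun _ ht => (hasDerivAt_sigma ht).continuousAt.continuousWithinAt

theorem tendsto_sigma_atTop (hpα : p < α + 1) (hqα : q < α + 1) (hαδ : 0 < α + δ) :
    Tendsto (sigma X Y A p q α δ) atTop (𝓝 0) := by
  have h := (((tendsto_rpow_neg_atTop (sub_pos.2 hpα)).const_mul X).add
    ((tendsto_rpow_neg_atTop (sub_pos.2 hqα)).const_mul Y)).sub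
    ((tendsto_rpow_neg_atTop hαδ).const_mul A)
  rw [mul_zero, mul_zero, mul_zero, add_zero, sub_zero] at h
  convert h using 2 with t
  rw [sigma, neg_sub, neg_sub, neg_add', sub_sub, sub_sub, add_comm 1 α]

theorem tendsto_sigma_nhdsGT_zero (hA : 0 < A) (hαδ : 0 < α + δ) (hpδ : 0 < p - 1 + δ)
    (hqδ : 0 < q - 1 + δ) : Tendsto (sigma X Y A p q α δ) (𝓝[>] 0) atBot := by
  have hpow {r : ℝ} (hr : 0 < r) : Tendsto (fun t : ℝ => t ^ r) (𝓝[>] 0) (𝓝 0) :=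
    ((Real.continuous_rpow_const hr.le).tendsto' 0 0 (Real.zero_rpow hr.ne')).mono_left
      nhdsWithin_le_nhds
  have hlim : Tendsto (fun t : ℝ => X * t ^ (p - 1 + δ) + Y * t ^ (q - 1 + δ) - A) (𝓝[>] 0)
      (𝓝 (-A)) := by
    simpa using (((hpow hpδ).const_mul X).add ((hpow hqδ).const_mul Y)).sub_const A
  refine ((tendsto_rpow_neg_nhdsGT_zero (by linarith : -α - δ < 0)).atTop_mul_neg
    (neg_neg_of_pos hA) hlim).congr' ?_
  filter_upwards [self_mem_nhdsWithin] with t ht using (sigma_eq_rpow_mul ht).symm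

theorem hasDerivAt_phi (hp : p ≠ 0) (hq : q ≠ 0) (hδ : 1 - δ ≠ 0) (hα : α + 1 ≠ 0) (c : ℝ)
    (ht : 0 < t) :
    HasDerivAt (phi X Y A p q α δ c) (t ^ α * (sigma X Y A p q α δ t - c)) t := by
  refine ((((hasDerivAt_div_mul_rpow X hp ht).add (hasDerivAt_div_mul_rpow Y hq ht)).sub
    (hasDerivAt_div_mul_rpow A hδ ht)).sub (hasDerivAt_div_mul_rpow c hα ht)).congr_deriv ?_
  rw [sigma, rpow_eq_mul_rpow_of_add ht (show α + (p - 1 - α) = p - 1 by ring),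
    rpow_eq_mul_rpow_of_add ht (show α + (q - 1 - α) = q - 1 by ring),
    rpow_eq_mul_rpow_of_add ht (show α + (-α - δ) = 1 - δ - 1 by ring), add_sub_cancel_right]
  ring

theorem strictMonoOn_rho (hX : 0 < X) (hY : 0 ≤ Y) (hpα : p < α + 1) (hqα : q ≤ α + 1)
    (hpδ : 0 < p - 1 + δ) (hqδ : 0 ≤ q - 1 + δ) : StrictMonoOn (rho X Y p q α δ) (Ici 0) :=
  fun _ hs _ _ hst => add_lt_add_of_lt_of_le
    (mul_lt_mul_of_pos_left (Real.rpow_lt_rpow hs hst hpδ) (mul_pos (sub_pos.2 hpα) hX))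
    (mul_le_mul_of_nonneg_left (Real.rpow_le_rpow hs hst.le hqδ)
      (mul_nonneg (sub_nonneg.2 hqα) hY))

theorem deriv_sigma_pos (hrho : StrictMonoOn (rho X Y p q α δ) (Ici 0))
    (heq : rho X Y p q α δ tmax = (α + δ) * A) (ht : 0 < t) (htm : t < tmax) :
    0 < deriv (sigma X Y A p q α δ) t := by
  rw [(hasDerivAt_sigma ht).deriv]
  have := hrho ht.le (ht.trans htm).le htm
  exact mul_pos (Real.rpow_pos_of_pos ht _) (by linarith)

theorem deriv_sigma_neg (hrho : StrictMonoOn (rho X Y p q α δ) (Ici 0))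
    (heq : rho X Y p q α δ tmax = (α + δ) * A) (htmax : 0 ≤ tmax) (htm : tmax < t) :
    deriv (sigma X Y A p q α δ) t < 0 := by
  have ht : 0 < t := htmax.trans_lt htm
  rw [(hasDerivAt_sigma ht).deriv]
  have := hrho htmax ht.le htm
  exact mul_neg_of_pos_of_neg (Real.rpow_pos_of_pos ht _) (by linarith)

theorem strictMonoOn_sigma (hrho : StrictMonoOn (rho X Y p q α δ) (Ici 0))
    (heq : rho X Y p q α δ tmax = (α + δ) * A) :
    StrictMonoOn (sigma X Y A p q α δ) (Ioc 0 tmax) :=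
  strictMonoOn_of_deriv_pos (convex_Ioc 0 tmax) (continuousOn_sigma.mono Ioc_subset_Ioi_self)
    fun t ht => by
      rw [interior_Ioc] at ht
      exact deriv_sigma_pos hrho heq ht.1 ht.2

theorem strictAntiOn_sigma (hrho : StrictMonoOn (rho X Y p q α δ) (Ici 0))
    (heq : rho X Y p q α δ tmax = (α + δ) * A) (htmax : 0 < tmax) :
    StrictAntiOn (sigma X Y A p q α δ) (Ici tmax) :=
  strictAntiOn_of_deriv_neg (convex_Ici tmax)
    (continuousOn_sigma.mono fun _ ht => htmax.trans_le ht) fun t ht => by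
      rw [interior_Ici] at ht
      exact deriv_sigma_neg hrho heq htmax.le ht

theorem sigma_nonneg (hrho : StrictMonoOn (rho X Y p q α δ) (Ici 0))
    (heq : rho X Y p q α δ tmax = (α + δ) * A) (htmax : 0 < tmax) (hpα : p < α + 1)
    (hqα : q < α + 1) (hαδ : 0 < α + δ) (ht : tmax ≤ t) : 0 ≤ sigma X Y A p q α δ t :=
  (strictAntiOn_sigma hrho heq htmax).antitoneOn.le_of_tendsto_atTop
    (tendsto_sigma_atTop hpα hqα hαδ) ht

end Fibering

end

open Fibering in
/-- when `B < 0`, there is a unique `t₁ > 0` with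
`σ(t₁) = λ·B`; it satisfies `t₁ < t_max` and `σ′(t₁) > 0`, and it is the
unique critical point of the fibering map
`φ(t) = (X/p)·t^p + (Y/q)·t^q − (A/(1−δ))·t^{1−δ} − (λB/(α+1))·t^{α+1}`
on `(0,∞)`, with `φ″(t₁) > 0` and `φ(t₁) = inf_{t>0} φ(t)`. -/
theorem statement6
    (δ p q α X Y A lam B : ℝ)
    (hδ0 : 0 < δ) (hδ1 : δ < 1)
    (hp : 2 ≤ p) (hpq : p < q) (hq : q < α + 1)
    (hX : 0 < X) (hY : 0 ≤ Y) (hA : 0 < A) (hlam : 0 < lam) (hB : B < 0)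
    (σ φ : ℝ → ℝ)
    (hσ : ∀ t : ℝ, σ t = X * t ^ (p - 1 - α) + Y * t ^ (q - 1 - α)
        - A * t ^ (-α - δ))
    (hφ : ∀ t : ℝ, φ t = (X / p) * t ^ p + (Y / q) * t ^ q
        - (A / (1 - δ)) * t ^ (1 - δ)
        - (lam * B / (α + 1)) * t ^ (α + 1))
    (tmax : ℝ) (htmax : 0 < tmax)
    (heq : (α + 1 - p) * X * tmax ^ (p - 1 + δ)
        + (α + 1 - q) * Y * tmax ^ (q - 1 + δ) = (α + δ) * A) :
    (∃! t₁ : ℝ, 0 < t₁ ∧ σ t₁ = lam * B) ∧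
    (∀ t₁ : ℝ, 0 < t₁ → σ t₁ = lam * B →
      t₁ < tmax ∧
      0 < deriv σ t₁ ∧
      deriv φ t₁ = 0 ∧
      (∀ t : ℝ, 0 < t → deriv φ t = 0 → t = t₁) ∧
      0 < deriv (deriv φ) t₁ ∧
      (∀ t : ℝ, 0 < t → φ t₁ ≤ φ t)) := by
  obtain rfl : σ = sigma X Y A p q α δ := funext hσ
  obtain rfl : φ = phi X Y A p q α δ (lam * B) := funext hφ
  have hc : lam * B < 0 := mul_neg_of_pos_of_neg hlam hB
  have hrho : StrictMonoOn (rho X Y p q α δ) (Ici 0) :=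
    strictMonoOn_rho hX hY (by linarith) (by linarith) (by linarith) (by linarith)
  have hmono := strictMonoOn_sigma hrho heq
  have hnonneg (t : ℝ) : tmax ≤ t → 0 ≤ sigma X Y A p q α δ t :=
    sigma_nonneg hrho heq htmax (by linarith) hq (by linarith)
  have hφ' (t : ℝ) (ht : 0 < t) : HasDerivAt (phi X Y A p q α δ (lam * B))
      (t ^ α * (sigma X Y A p q α δ t - lam * B)) t :=
    hasDerivAt_phi (by linarith : 0 < p).ne' (by linarith : 0 < q).ne'
      (sub_ne_zero.2 hδ1.ne') (by linarith : 0 < α + 1).ne' (lam * B) ht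
  obtain ⟨t₁, ht₁, hσt₁⟩ := exists_pos_apply_eq htmax continuousOn_sigma
    (tendsto_sigma_nhdsGT_zero hA (by linarith) (by linarith) (by linarith)) hnonneg hc
  refine ⟨⟨t₁, ⟨ht₁, hσt₁⟩, fun t ht => hmono.eq_of_apply_eq_neg hnonneg hc ht₁ hσt₁ ht.1 ht.2⟩,
    fun t₁ ht₁ hσt₁ => ?_⟩
  have hlt : t₁ < tmax := lt_of_apply_eq_neg hnonneg hc hσt₁
  have hσ' : 0 < deriv (sigma X Y A p q α δ) t₁ := deriv_sigma_pos hrho heq ht₁ hlt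
  refine ⟨hlt, hσ', by rw [(hφ' t₁ ht₁).deriv, hσt₁, sub_self, mul_zero], fun t ht hφt => ?_,
    ?_, fun t ht => ?_⟩
  · rw [(hφ' t ht).deriv, mul_eq_zero, sub_eq_zero] at hφt
    exact hmono.eq_of_apply_eq_neg hnonneg hc ht₁ hσt₁ ht
      (hφt.resolve_left (Real.rpow_pos_of_pos ht α).ne')
  · rw [(hasDerivAt_deriv_of_hasDerivAt_mul_sub
      (eventually_gt_nhds ht₁ |>.mono hφ') (Real.hasDerivAt_rpow_const (Or.inl ht₁.ne'))
      (hasDerivAt_sigma ht₁) hσt₁).deriv, ← (hasDerivAt_sigma ht₁).deriv]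
    exact mul_pos (Real.rpow_pos_of_pos ht₁ α) hσ'
  · exact le_of_hasDerivAt_neg_of_pos ht₁ hφ'
      (fun s hs hst => mul_neg_of_pos_of_neg (Real.rpow_pos_of_pos hs α)
        (sub_neg.2 (hmono.apply_lt_of_lt_of_apply_eq_neg hnonneg hc ht₁ hσt₁ hs hst)))
      (fun s hst => mul_pos (Real.rpow_pos_of_pos (ht₁.trans hst) α)
        (sub_pos.2 (hmono.lt_apply_of_lt_of_apply_eq_neg hnonneg hc ht₁ hσt₁ hst))) ht
end

section
/- Let δ, p, q, α be real numbers with 0<δ<1, 2≤p<q and q<α+1, let X>0, Y≥0, A>0, λ>0, B>0 be reals, define σ(t)=X·t^{p−1−α}+Y·t^{q−1−α}−A·t^{−α−δ} and φ(t)=(X/p)·t^p+(Y/q)·t^q−(A/(1−δ))·t^{1−δ}−(λB/(α+1))·t^{α+1} for t>0, let t_max be the unique critical point of σ, and assume λ·B < σ(t_max). Then there exist exactly two points 0<t₁<t_max<t₂ such that σ(t₁)=λ·B=σ(t₂), and these satisfy σ′(t₁)>0>σ′(t₂). Consequently φ′(t₁)=φ′(t₂)=0, φ″(t₁)>0 and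 φ″(t₂)<0; in particular t₁ and t₂ are the only critical points of φ on (0,∞). -/
/-!
Since `φ′(t) = t^α (σ(t) − λB)`, the critical points of `φ` are the solutions of `σ(t) = λB`.
Writing `σ′(t) = t^{−α−δ−1} ((α+δ)A − w(t))` with `w(t) = (α+1−p)X t^{p−1+δ} + (α+1−q)Y t^{q−1+δ}`
strictly increasing, `σ` increases strictly up to the root `t_max` of `w = (α+δ)A` and decreases
strictly after it. As `σ → −∞` at `0⁺` and `σ → 0 < λB` at `+∞`, the intermediate value theorem
gives exactly one solution on each side of `t_max`, where `σ′` has the sign of `φ″ = t^α σ′`.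
-/

open Filter Set Real
open Topology

theorem exists_pair_eq_of_strictMonoOn_of_strictAntiOn {f : ℝ → ℝ} {a m c : ℝ} (ham : a < m)
    (hf : ContinuousOn f (Ioi a)) (hmono : StrictMonoOn f (Ioc a m))
    (hanti : StrictAntiOn f (Ici m)) (hleft : ∀ᶠ t in 𝓝[>] a, f t < c)
    (hright : ∀ᶠ t in atTop, f t < c) (hc : c < f m) :
    ∃ t₁ t₂ : ℝ, a < t₁ ∧ t₁ < m ∧ m < t₂ ∧ f t₁ = c ∧ f t₂ = c ∧
      ∀ t : ℝ, a < t → f t = c → t = t₁ ∨ t = t₂ := by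
  obtain ⟨s₁, hs₁, has₁, hs₁m⟩ := (hleft.and (Ioo_mem_nhdsGT ham)).exists
  obtain ⟨s₂, hs₂, hms₂⟩ := (hright.and (eventually_gt_atTop m)).exists
  obtain ⟨t₁, ⟨hst₁, ht₁m⟩, ht₁⟩ := intermediate_value_Ioo hs₁m.le
    (hf.mono fun t ht => has₁.trans_le ht.1) ⟨hs₁, hc⟩
  obtain ⟨t₂, ⟨hmt₂, -⟩, ht₂⟩ := intermediate_value_Ioo' hms₂.le
    (hf.mono fun t ht => ham.trans_le ht.1) ⟨hs₂, hc⟩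
  refine ⟨t₁, t₂, has₁.trans hst₁, ht₁m, hmt₂, ht₁, ht₂, fun t hat ht => ?_⟩
  rcases lt_trichotomy t m with h | rfl | h
  · exact .inl (hmono.injOn ⟨hat, h.le⟩ ⟨has₁.trans hst₁, ht₁m.le⟩ (ht.trans ht₁.symm))
  · exact absurd ht hc.ne'
  · exact .inr (hanti.injOn h.le hmt₂.le (ht.trans ht₂.symm))

theorem hasDerivAt_mul_sub_const_of_eq {g f : ℝ → ℝ} {g' f' t c : ℝ} (hg : HasDerivAt g g' t)
    (hf : HasDerivAt f f' t) (hc : f t = c) :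
    HasDerivAt (fun s => g s * (f s - c)) (g t * f') t := by
  refine (hg.mul (hf.sub_const c)).congr_deriv ?_
  rw [hc, sub_self, mul_zero, zero_add]

theorem Real.rpow_eq_rpow_mul_rpow {t a b c : ℝ} (ht : 0 < t) (h : a = b + c) :
    t ^ a = t ^ b * t ^ c :=
  h ▸ Real.rpow_add ht b c

noncomputable section

def fiberSigma (X Y A p q α δ t : ℝ) : ℝ :=
  X * t ^ (p - 1 - α) + Y * t ^ (q - 1 - α) - A * t ^ (-α - δ)

def fiberMap (X Y A p q α δ c t : ℝ) : ℝ :=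
  (X / p) * t ^ p + (Y / q) * t ^ q - (A / (1 - δ)) * t ^ (1 - δ) - (c / (α + 1)) * t ^ (α + 1)

def criticalWeight (X Y p q α δ t : ℝ) : ℝ :=
  (α + 1 - p) * X * t ^ (p - 1 + δ) + (α + 1 - q) * Y * t ^ (q - 1 + δ)

end

section

variable {X Y A p q α δ : ℝ}

theorem fiberSigma_eq_mul {t : ℝ} (ht : 0 < t) :
    fiberSigma X Y A p q α δ t =
      t ^ (-α - δ) * (X * t ^ (p - 1 + δ) + Y * t ^ (q - 1 + δ) - A) := by
  rw [fiberSigma, rpow_eq_rpow_mul_rpow ht (by ring : p - 1 - α = -α - δ + (p - 1 + δ)),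
    rpow_eq_rpow_mul_rpow ht (by ring : q - 1 - α = -α - δ + (q - 1 + δ))]
  ring

theorem hasDerivAt_fiberSigma {t : ℝ} (ht : 0 < t) :
    HasDerivAt (fiberSigma X Y A p q α δ)
      (t ^ (-α - δ - 1) * ((α + δ) * A - criticalWeight X Y p q α δ t)) t := by
  have hpow (r : ℝ) := hasDerivAt_rpow_const (x := t) (p := r) (.inl ht.ne')
  refine ((((hpow (p - 1 - α)).const_mul X).add ((hpow (q - 1 - α)).const_mul Y)).sub
    ((hpow (-α - δ)).const_mul A)).congr_deriv ?_
  rw [criticalWeight,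
    rpow_eq_rpow_mul_rpow ht (by ring : p - 1 - α - 1 = -α - δ - 1 + (p - 1 + δ)),
    rpow_eq_rpow_mul_rpow ht (by ring : q - 1 - α - 1 = -α - δ - 1 + (q - 1 + δ))]
  ring

theorem continuousOn_fiberSigma : ContinuousOn (fiberSigma X Y A p q α δ) (Ioi 0) :=
  fun _ ht => (hasDerivAt_fiberSigma ht).continuousAt.continuousWithinAt

theorem criticalWeight_strictMonoOn (hX : 0 < X) (hY : 0 ≤ Y) (hpα : p < α + 1)
    (hqα : q ≤ α + 1) (hp : 0 < p - 1 + δ) (hq : 0 ≤ q - 1 + δ) :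
    StrictMonoOn (criticalWeight X Y p q α δ) (Ici 0) := fun s hs t _ hst =>
  add_lt_add_of_lt_of_le
    (mul_lt_mul_of_pos_left (rpow_lt_rpow hs hst hp) (mul_pos (by linarith) hX))
    (mul_le_mul_of_nonneg_left (rpow_le_rpow hs hst.le hq) (mul_nonneg (by linarith) hY))

section Unimodal

variable {tmax : ℝ} (hw : StrictMonoOn (criticalWeight X Y p q α δ) (Ici 0))
  (hmax : criticalWeight X Y p q α δ tmax = (α + δ) * A)
include hw hmax

theorem deriv_fiberSigma_pos {t : ℝ} (ht : 0 < t) (htm : t < tmax) :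
    0 < deriv (fiberSigma X Y A p q α δ) t := by
  rw [(hasDerivAt_fiberSigma ht).deriv]
  have := hw ht.le (ht.le.trans htm.le) htm
  exact mul_pos (rpow_pos_of_pos ht _) (by linarith)

theorem deriv_fiberSigma_neg (h0 : 0 < tmax) {t : ℝ} (htm : tmax < t) :
    deriv (fiberSigma X Y A p q α δ) t < 0 := by
  have ht : 0 < t := h0.trans htm
  rw [(hasDerivAt_fiberSigma ht).deriv]
  have := hw h0.le ht.le htm
  exact mul_neg_of_pos_of_neg (rpow_pos_of_pos ht _) (by linarith)

theorem strictMonoOn_fiberSigma : StrictMonoOn (fiberSigma X Y A p q α δ) (Ioc 0 tmax) :=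
  strictMonoOn_of_deriv_pos (convex_Ioc 0 tmax) (continuousOn_fiberSigma.mono Ioc_subset_Ioi_self)
    fun t ht => by
      rw [interior_Ioc] at ht
      exact deriv_fiberSigma_pos hw hmax ht.1 ht.2

theorem strictAntiOn_fiberSigma (h0 : 0 < tmax) :
    StrictAntiOn (fiberSigma X Y A p q α δ) (Ici tmax) :=
  strictAntiOn_of_deriv_neg (convex_Ici tmax)
    (continuousOn_fiberSigma.mono fun _ ht => h0.trans_le ht) fun t ht => by
      rw [interior_Ici] at ht
      exact deriv_fiberSigma_neg hw hmax h0 ht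

end Unimodal

theorem eventually_fiberSigma_neg (hA : 0 < A) (hp : 0 < p - 1 + δ) (hq : 0 < q - 1 + δ) :
    ∀ᶠ t in 𝓝[>] 0, fiberSigma X Y A p q α δ t < 0 := by
  have hcont : Continuous fun t : ℝ => X * t ^ (p - 1 + δ) + Y * t ^ (q - 1 + δ) - A := by
    have := continuous_rpow_const hp.le
    have := continuous_rpow_const hq.le
    fun_prop
  have hneg : ∀ᶠ t in 𝓝 0, X * t ^ (p - 1 + δ) + Y * t ^ (q - 1 + δ) - A < 0 :=
    hcont.continuousAt.eventually_lt continuousAt_const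
      (by simp [zero_rpow hp.ne', zero_rpow hq.ne', hA])
  filter_upwards [nhdsWithin_le_nhds hneg, self_mem_nhdsWithin] with t hFt ht
  rw [fiberSigma_eq_mul ht]
  exact mul_neg_of_pos_of_neg (rpow_pos_of_pos ht _) hFt

theorem tendsto_fiberSigma_atTop (hp : p < α + 1) (hq : q < α + 1) (hαδ : 0 < α + δ) :
    Tendsto (fiberSigma X Y A p q α δ) atTop (𝓝 0) := by
  have hpow {r s : ℝ} (hr : 0 < r) (hs : s = -r) : Tendsto (fun t : ℝ => t ^ s) atTop (𝓝 0) :=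
    hs ▸ tendsto_rpow_neg_atTop hr
  have h := (((hpow (s := p - 1 - α) (sub_pos.2 hp) (by ring)).const_mul X).add
    ((hpow (s := q - 1 - α) (sub_pos.2 hq) (by ring)).const_mul Y)).sub
    ((hpow (s := -α - δ) hαδ (by ring)).const_mul A)
  simp only [mul_zero, add_zero, sub_zero] at h
  exact h

section FiberMap

variable {c : ℝ} (hp : p ≠ 0) (hq : q ≠ 0) (hδ : 1 - δ ≠ 0) (hα : α + 1 ≠ 0)
include hp hq hδ hα

theorem hasDerivAt_fiberMap {t : ℝ} (ht : 0 < t) :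
    HasDerivAt (fiberMap X Y A p q α δ c) (t ^ α * (fiberSigma X Y A p q α δ t - c)) t := by
  have hpow (r : ℝ) := hasDerivAt_rpow_const (x := t) (p := r) (.inl ht.ne')
  refine (((((hpow p).const_mul (X / p)).add ((hpow q).const_mul (Y / q))).sub
    ((hpow (1 - δ)).const_mul (A / (1 - δ)))).sub
    ((hpow (α + 1)).const_mul (c / (α + 1)))).congr_deriv ?_
  rw [fiberSigma, add_sub_cancel_right, sub_sub_cancel_left,
    rpow_eq_rpow_mul_rpow ht (by ring : p - 1 = α + (p - 1 - α)),
    rpow_eq_rpow_mul_rpow ht (by ring : q - 1 = α + (q - 1 - α)),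
    rpow_eq_rpow_mul_rpow ht (by ring : -δ = α + (-α - δ))]
  field_simp

theorem deriv_fiberMap_eq_zero_iff {t : ℝ} (ht : 0 < t) :
    deriv (fiberMap X Y A p q α δ c) t = 0 ↔ fiberSigma X Y A p q α δ t = c := by
  rw [(hasDerivAt_fiberMap hp hq hδ hα ht).deriv, mul_eq_zero, sub_eq_zero,
    or_iff_right (rpow_pos_of_pos ht α).ne']

theorem deriv_deriv_fiberMap_of_eq {t : ℝ} (ht : 0 < t) (hσ : fiberSigma X Y A p q α δ t = c) :
    deriv (deriv (fiberMap X Y A p q α δ c)) t =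
      t ^ α * deriv (fiberSigma X Y A p q α δ) t := by
  have hD : deriv (fiberMap X Y A p q α δ c) =ᶠ[𝓝 t]
      fun s => s ^ α * (fiberSigma X Y A p q α δ s - c) :=
    eventually_of_mem (Ioi_mem_nhds ht) fun s hs => (hasDerivAt_fiberMap hp hq hδ hα hs).deriv
  rw [hD.deriv_eq, (hasDerivAt_fiberSigma ht).deriv]
  exact (hasDerivAt_mul_sub_const_of_eq (hasDerivAt_rpow_const (.inl ht.ne'))
    (hasDerivAt_fiberSigma ht) hσ).deriv

end FiberMap

end

/-- when `B > 0` and `λ·B < σ(t_max)`, there are exactly two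
points `0 < t₁ < t_max < t₂` with `σ(t₁) = λ·B = σ(t₂)`; they satisfy
`σ′(t₁) > 0 > σ′(t₂)`, hence `φ′(t₁) = φ′(t₂) = 0`, `φ″(t₁) > 0`,
`φ″(t₂) < 0`, and `t₁, t₂` are the only critical points of the fibering map
`φ(t) = (X/p)·t^p + (Y/q)·t^q − (A/(1−δ))·t^{1−δ} − (λB/(α+1))·t^{α+1}`
on `(0,∞)`. -/
theorem statement7
    (δ p q α X Y A lam B : ℝ)
    (hδ0 : 0 < δ) (hδ1 : δ < 1)
    (hp : 2 ≤ p) (hpq : p < q) (hq : q < α + 1)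
    (hX : 0 < X) (hY : 0 ≤ Y) (hA : 0 < A) (hlam : 0 < lam) (hB : 0 < B)
    (σ φ : ℝ → ℝ)
    (hσ : ∀ t : ℝ, σ t = X * t ^ (p - 1 - α) + Y * t ^ (q - 1 - α)
        - A * t ^ (-α - δ))
    (hφ : ∀ t : ℝ, φ t = (X / p) * t ^ p + (Y / q) * t ^ q
        - (A / (1 - δ)) * t ^ (1 - δ)
        - (lam * B / (α + 1)) * t ^ (α + 1))
    (tmax : ℝ) (htmax : 0 < tmax)
    (heq : (α + 1 - p) * X * tmax ^ (p - 1 + δ)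
        + (α + 1 - q) * Y * tmax ^ (q - 1 + δ) = (α + δ) * A)
    (hsmall : lam * B < σ tmax) :
    ∃ t₁ t₂ : ℝ, 0 < t₁ ∧ t₁ < tmax ∧ tmax < t₂ ∧
      σ t₁ = lam * B ∧ σ t₂ = lam * B ∧
      (∀ t : ℝ, 0 < t → σ t = lam * B → t = t₁ ∨ t = t₂) ∧
      0 < deriv σ t₁ ∧ deriv σ t₂ < 0 ∧
      deriv φ t₁ = 0 ∧ deriv φ t₂ = 0 ∧
      0 < deriv (deriv φ) t₁ ∧ deriv (deriv φ) t₂ < 0 ∧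
      (∀ t : ℝ, 0 < t → deriv φ t = 0 → t = t₁ ∨ t = t₂) := by
  obtain rfl : σ = fiberSigma X Y A p q α δ := funext hσ
  obtain rfl : φ = fiberMap X Y A p q α δ (lam * B) := funext hφ
  have hlB : 0 < lam * B := mul_pos hlam hB
  have hp1 : 0 < p - 1 + δ := by linarith
  have hq1 : 0 < q - 1 + δ := by linarith
  have hw := criticalWeight_strictMonoOn hX hY (hpq.trans hq) hq.le hp1 hq1.le
  obtain ⟨t₁, t₂, ht₁, ht₁m, hmt₂, hσ₁, hσ₂, huniq⟩ :=
    exists_pair_eq_of_strictMonoOn_of_strictAntiOn htmax continuousOn_fiberSigma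
      (strictMonoOn_fiberSigma hw heq) (strictAntiOn_fiberSigma hw heq htmax)
      ((eventually_fiberSigma_neg hA hp1 hq1).mono fun _ h => h.trans hlB)
      ((tendsto_fiberSigma_atTop (hpq.trans hq) hq (by linarith)).eventually_lt_const hlB) hsmall
  have ht₂ : 0 < t₂ := htmax.trans hmt₂
  have hp0 : p ≠ 0 := by linarith
  have hq0 : q ≠ 0 := by linarith
  have hδ' : 1 - δ ≠ 0 := by linarith
  have hα : α + 1 ≠ 0 := by linarith
  have hφ' {t : ℝ} (ht : 0 < t) :=
    deriv_fiberMap_eq_zero_iff (X := X) (Y := Y) (A := A) (c := lam * B) hp0 hq0 hδ' hα ht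
  have hφ'' {t : ℝ} (ht : 0 < t) :=
    deriv_deriv_fiberMap_of_eq (X := X) (Y := Y) (A := A) (c := lam * B) hp0 hq0 hδ' hα ht
  have hσ'₁ := deriv_fiberSigma_pos hw heq ht₁ ht₁m
  have hσ'₂ := deriv_fiberSigma_neg hw heq htmax hmt₂
  refine ⟨t₁, t₂, ht₁, ht₁m, hmt₂, hσ₁, hσ₂, huniq, hσ'₁, hσ'₂, (hφ' ht₁).2 hσ₁,
    (hφ' ht₂).2 hσ₂, ?_, ?_, fun t ht h => huniq t ht ((hφ' ht).1 h)⟩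
  · rw [hφ'' ht₁ hσ₁]
    exact mul_pos (rpow_pos_of_pos ht₁ α) hσ'₁
  · rw [hφ'' ht₂ hσ₂]
    exact mul_neg_of_pos_of_neg (rpow_pos_of_pos ht₂ α) hσ'₂
end

section
/- Let δ, p, q, α be real numbers with 0<δ<1, 2≤p<q and q<α+1, let X>0 and Y≥0 be reals, and let L be a real number satisfying L < ((p+δ−1)/(α+δ))·X + ((q+δ−1)/(α+δ))·Y. Then (1/p − 1/(1−δ))·X + (1/q − 1/(1−δ))·Y + (1/(1−δ) − 1/(α+1))·L ≤ ((p+δ−1)(p−α−1)/(p(1−δ)(α+1)))·X + ((q+δ−1)(q−α−1)/(q(1−δ)(α+1)))·Y < 0. -/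
/-- the arithmetic core of the negativity of the energy on the
Nehari subset `M_λ⁺`: if
`L < ((p+δ−1)/(α+δ))·X + ((q+δ−1)/(α+δ))·Y`, then
`(1/p − 1/(1−δ))·X + (1/q − 1/(1−δ))·Y + (1/(1−δ) − 1/(α+1))·L ≤
((p+δ−1)(p−α−1)/(p(1−δ)(α+1)))·X + ((q+δ−1)(q−α−1)/(q(1−δ)(α+1)))·Y < 0`. -/
theorem statement8
    (δ p q α X Y L : ℝ)
    (hδ0 : 0 < δ) (hδ1 : δ < 1)
    (hp : 2 ≤ p) (hpq : p < q) (hq : q < α + 1)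
    (hX : 0 < X) (hY : 0 ≤ Y)
    (hL : L < ((p + δ - 1) / (α + δ)) * X + ((q + δ - 1) / (α + δ)) * Y) :
    (1 / p - 1 / (1 - δ)) * X + (1 / q - 1 / (1 - δ)) * Y
        + (1 / (1 - δ) - 1 / (α + 1)) * L
      ≤ ((p + δ - 1) * (p - α - 1) / (p * (1 - δ) * (α + 1))) * X
        + ((q + δ - 1) * (q - α - 1) / (q * (1 - δ) * (α + 1))) * Y ∧
    ((p + δ - 1) * (p - α - 1) / (p * (1 - δ) * (α + 1))) * X
        + ((q + δ - 1) * (q - α - 1) / (q * (1 - δ) * (α + 1))) * Y < 0 := by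
  have hp0 : (0:ℝ) < p := by linarith
  have hq0 : (0:ℝ) < q := by linarith
  have h1δ : (0:ℝ) < 1 - δ := by linarith
  have hα1 : (0:ℝ) < α + 1 := by linarith
  have hαδ : (0:ℝ) < α + δ := by linarith
  have hcoef : 0 < 1 / (1 - δ) - 1 / (α + 1) := by
    rw [sub_pos]
    apply one_div_lt_one_div_of_lt h1δ
    linarith
  have heq : (1 / p - 1 / (1 - δ)) * X + (1 / q - 1 / (1 - δ)) * Y
        + (1 / (1 - δ) - 1 / (α + 1)) *
          (((p + δ - 1) / (α + δ)) * X + ((q + δ - 1) / (α + δ)) * Y)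
      = ((p + δ - 1) * (p - α - 1) / (p * (1 - δ) * (α + 1))) * X
        + ((q + δ - 1) * (q - α - 1) / (q * (1 - δ) * (α + 1))) * Y := by
    field_simp
    ring
  constructor
  · nlinarith [mul_le_mul_of_nonneg_left hL.le hcoef.le]
  · have hXneg : ((p + δ - 1) * (p - α - 1) / (p * (1 - δ) * (α + 1))) * X < 0 := by
      apply mul_neg_of_neg_of_pos _ hX
      apply div_neg_of_neg_of_pos
      · nlinarith
      · positivity
    have hYnp : ((q + δ - 1) * (q - α - 1) / (q * (1 - δ) * (α + 1))) * Y ≤ 0 := by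
      apply mul_nonpos_of_nonpos_of_nonneg _ hY
      apply div_nonpos_of_nonpos_of_nonneg
      · nlinarith
      · positivity
    linarith
end

section
/- Let δ, p, q, p* be real numbers with 0<δ<1 and 2≤p<q<p*, and let K_a>0, K_b>0 be real constants. Define A₁=((p*−1+δ)·K_a/(p*−p))^{p/(p−1+δ)}, A₂=((p*−1+δ)·K_a)^{p/(p−1+δ)}/((p*−q)·(p*−p)^{(1−δ)/(p−1+δ)}), D₂=A₁+A₂, and Λ*=(p−1+δ)/((p*−1+δ)·K_b·D₂^{(p*−p)/p}). Then Λ*>0 and for every λ with 0<λ<Λ*: (i) every pair of reals X>0, Y≥0 with (p*−p)·X+(p*−q)·Y < (p*−1+δ)·K_a·X^{(1−δ)/p} satisfies X+Y < D₂; (ii) every pair of reals X′>0, Y′≥0 with (p−1+δ)·X′+(q−1+δ)·Y′ < λ·(p*−1+δ)·K_b·X′^{p*/p} satisfies X′ > ((p−1+δ)/(λ(p*−1+δ)K_b))^{p/(p*−p)} > D₂; in particular X′ > X+Y for all such pairs. -/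
/-!
Both constraints compare a linear expression with a power. In (i) the exponent `(1-δ)/p` is
below `1`, so the constraint bounds `X` from above, and feeding that bound back into
`X^((1-δ)/p)` bounds `Y`. In (ii) the exponent `p*/p` exceeds `1`, so the constraint bounds `X'`
from below by `((p-1+δ)/(λ(p*-1+δ)K_b))^(p/(p*-p))`, and this exceeds `D₂` exactly when
`λ < Λ*`.
-/

namespace Real

variable {a b c k C D X Y m n p s lam : ℝ}

lemma lt_rpow_of_mul_lt_mul_rpow (ha : 0 < a) (hmn : m + n = p) (hm : 0 ≤ m) (hn : 0 < n)
    (hX : 0 < X) (h : a * X < C * X ^ (m / p)) : X < (C / a) ^ (p / n) := by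
  have hp : 0 < p := by linarith [hmn, hn]
  have hsplit : X = X ^ (n / p) * X ^ (m / p) := by
    rw [← rpow_add hX, ← add_div, add_comm, hmn, div_self hp.ne', rpow_one]
  have hXm : 0 < X ^ (m / p) := rpow_pos_of_pos hX _
  have hlt : X ^ (n / p) < C / a := by
    rw [lt_div_iff₀ ha]
    nth_rewrite 1 [hsplit] at h
    nlinarith
  rw [← inv_div n p]
  exact (lt_rpow_inv_iff_of_pos hX.le ((rpow_pos_of_pos hX _).le.trans hlt.le)
    (div_pos hn hp)).2 hlt

lemma mul_div_rpow_eq_rpow_div_rpow (ha : 0 < a) (hC : 0 < C) (hmn : m + n = p) (hn : n ≠ 0) :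
    C * (C / a) ^ (m / n) = C ^ (p / n) / a ^ (m / n) := by
  have hexp : p / n = 1 + m / n := by rw [← hmn]; field_simp; ring
  rw [div_rpow hC.le ha.le, hexp, rpow_add hC, rpow_one, mul_div_assoc]

lemma add_lt_of_mul_add_mul_lt_mul_rpow (ha : 0 < a) (hb : 0 < b) (hmn : m + n = p)
    (hm : 0 ≤ m) (hn : 0 < n) (hX : 0 < X) (hY : 0 ≤ Y) (h : a * X + b * Y < C * X ^ (m / p)) :
    X + Y < (C / a) ^ (p / n) + C ^ (p / n) / (b * a ^ (m / n)) := by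
  have hp : 0 < p := by linarith [hmn, hn]
  have haX : 0 < a * X := mul_pos ha hX
  have hbY : 0 ≤ b * Y := mul_nonneg hb.le hY
  have hC : 0 < C := pos_of_mul_pos_left (by linarith) (rpow_pos_of_pos hX _).le
  have hXlt : X < (C / a) ^ (p / n) := lt_rpow_of_mul_lt_mul_rpow ha hmn hm hn hX (by linarith)
  have hXm : X ^ (m / p) ≤ (C / a) ^ (m / n) := by
    have hexp : m / n = p / n * (m / p) := by field_simp
    rw [hexp, rpow_mul (div_pos hC ha).le]
    exact rpow_le_rpow hX.le hXlt.le (div_nonneg hm hp.le)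
  have hYlt : Y < C * (C / a) ^ (m / n) / b := by
    rw [lt_div_iff₀ hb]
    nlinarith [mul_le_mul_of_nonneg_left hXm hC.le]
  rw [mul_div_rpow_eq_rpow_div_rpow ha hC hmn hn.ne', div_div, mul_comm (a ^ _)] at hYlt
  linarith

lemma rpow_div_lt_of_mul_lt_mul_rpow (hc : 0 ≤ c) (hk : 0 < k) (hp : 0 < p) (hps : p < s)
    (hX : 0 < X) (h : c * X < k * X ^ (s / p)) : (c / k) ^ (p / (s - p)) < X := by
  have hsplit : X ^ (s / p) = X ^ ((s - p) / p) * X := by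
    rw [← rpow_add_one hX.ne', sub_div, div_self hp.ne', sub_add_cancel]
  have hlt : c / k < X ^ ((s - p) / p) := by
    rw [hsplit] at h
    rw [div_lt_iff₀ hk]
    nlinarith
  rw [← inv_div (s - p) p]
  exact (rpow_inv_lt_iff_of_pos (div_nonneg hc hk.le) hX.le
    (div_pos (sub_pos.2 hps) hp)).2 hlt

lemma lt_rpow_of_lt_div_mul_rpow (hD : 0 < D) (hk : 0 < k) (hlam : 0 < lam) (hm : 0 < m)
    (hn : 0 < n) (h : lam < c / (k * D ^ (m / n))) : D < (c / (lam * k)) ^ (n / m) := by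
  have hkD : 0 < k * D ^ (m / n) := mul_pos hk (rpow_pos_of_pos hD _)
  have hc : 0 < c := (div_pos_iff_of_pos_right hkD).1 (hlam.trans h)
  rw [lt_div_iff₀ hkD] at h
  rw [← inv_div m n,
    lt_rpow_inv_iff_of_pos hD.le (div_pos hc (mul_pos hlam hk)).le (div_pos hm hn), lt_div_iff₀ (mul_pos hlam hk)]
  linarith

end Real

/-- the arithmetic form of the gap-structure proposition in the
critical case `α+1 = p*`: with
`A₁ = ((p*−1+δ)·K_a/(p*−p))^{p/(p−1+δ)}`,
`A₂ = ((p*−1+δ)·K_a)^{p/(p−1+δ)}/((p*−q)·(p*−p)^{(1−δ)/(p−1+δ)})`,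
`D₂ = A₁+A₂` and `Λ* = (p−1+δ)/((p*−1+δ)·K_b·D₂^{(p*−p)/p})`, one has
`Λ* > 0` and for every `0 < λ < Λ*`: (i) any `X > 0`, `Y ≥ 0` with
`(p*−p)X+(p*−q)Y < (p*−1+δ)K_a X^{(1−δ)/p}` satisfy `X+Y < D₂`;
(ii) any `X′ > 0`, `Y′ ≥ 0` with
`(p−1+δ)X′+(q−1+δ)Y′ < λ(p*−1+δ)K_b X′^{p*/p}` satisfy
`X′ > ((p−1+δ)/(λ(p*−1+δ)K_b))^{p/(p*−p)} > D₂`; in particular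
`X′ > X+Y` for all such pairs. -/
theorem statement11
    (δ p q ps Ka Kb A₁ A₂ D₂ Λstar : ℝ)
    (hδ0 : 0 < δ) (hδ1 : δ < 1)
    (hp : 2 ≤ p) (hpq : p < q) (hq : q < ps)
    (hKa : 0 < Ka) (hKb : 0 < Kb)
    (hA₁ : A₁ = ((ps - 1 + δ) * Ka / (ps - p)) ^ (p / (p - 1 + δ)))
    (hA₂ : A₂ = ((ps - 1 + δ) * Ka) ^ (p / (p - 1 + δ))
        / ((ps - q) * (ps - p) ^ ((1 - δ) / (p - 1 + δ))))
    (hD₂ : D₂ = A₁ + A₂)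
    (hΛ : Λstar = (p - 1 + δ) / ((ps - 1 + δ) * Kb * D₂ ^ ((ps - p) / p))) :
    0 < Λstar ∧
    ∀ lam : ℝ, 0 < lam → lam < Λstar →
      (∀ X Y : ℝ, 0 < X → 0 ≤ Y →
        (ps - p) * X + (ps - q) * Y < (ps - 1 + δ) * Ka * X ^ ((1 - δ) / p) →
        X + Y < D₂) ∧
      (∀ X' Y' : ℝ, 0 < X' → 0 ≤ Y' →
        (p - 1 + δ) * X' + (q - 1 + δ) * Y'
            < lam * (ps - 1 + δ) * Kb * X' ^ (ps / p) →
        ((p - 1 + δ) / (lam * (ps - 1 + δ) * Kb)) ^ (p / (ps - p)) < X' ∧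
        D₂ < ((p - 1 + δ) / (lam * (ps - 1 + δ) * Kb)) ^ (p / (ps - p))) ∧
      (∀ X Y X' Y' : ℝ, 0 < X → 0 ≤ Y → 0 < X' → 0 ≤ Y' →
        (ps - p) * X + (ps - q) * Y < (ps - 1 + δ) * Ka * X ^ ((1 - δ) / p) →
        (p - 1 + δ) * X' + (q - 1 + δ) * Y'
            < lam * (ps - 1 + δ) * Kb * X' ^ (ps / p) →
        X + Y < X') := by
  have hpδ : 0 < p - 1 + δ := by linarith
  have hpsp : 0 < ps - p := by linarith
  have hps1 : 0 < ps - 1 + δ := by linarith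
  have hD₂pos : 0 < D₂ := by
    have hpsq : 0 < ps - q := by linarith
    have hA₁pos : 0 < A₁ := hA₁ ▸ Real.rpow_pos_of_pos (div_pos (mul_pos hps1 hKa) hpsp) _
    have hA₂pos : 0 < A₂ := hA₂ ▸ div_pos (Real.rpow_pos_of_pos (mul_pos hps1 hKa) _)
      (mul_pos hpsq (Real.rpow_pos_of_pos hpsp _))
    linarith
  have part_i : ∀ X Y : ℝ, 0 < X → 0 ≤ Y →
      (ps - p) * X + (ps - q) * Y < (ps - 1 + δ) * Ka * X ^ ((1 - δ) / p) → X + Y < D₂ :=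
    fun X Y hX hY h => hD₂ ▸ hA₁ ▸ hA₂ ▸ Real.add_lt_of_mul_add_mul_lt_mul_rpow hpsp
      (by linarith) (by ring) (by linarith) hpδ hX hY h
  have part_ii : ∀ lam : ℝ, 0 < lam → lam < Λstar → ∀ X' Y' : ℝ, 0 < X' → 0 ≤ Y' →
      (p - 1 + δ) * X' + (q - 1 + δ) * Y' < lam * (ps - 1 + δ) * Kb * X' ^ (ps / p) →
      ((p - 1 + δ) / (lam * (ps - 1 + δ) * Kb)) ^ (p / (ps - p)) < X' ∧
      D₂ < ((p - 1 + δ) / (lam * (ps - 1 + δ) * Kb)) ^ (p / (ps - p)) := by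
    intro lam hlam hlt X' Y' hX' hY' h
    have hY'term : 0 ≤ (q - 1 + δ) * Y' := mul_nonneg (by linarith) hY'
    refine ⟨Real.rpow_div_lt_of_mul_lt_mul_rpow hpδ.le (by positivity) (by linarith)
      (hpq.trans hq) hX' (by linarith), ?_⟩
    rw [mul_assoc lam]
    exact Real.lt_rpow_of_lt_div_mul_rpow hD₂pos (mul_pos hps1 hKb) hlam hpsp (by linarith)
      (hΛ ▸ hlt)
  refine ⟨hΛ ▸ div_pos hpδ (mul_pos (mul_pos hps1 hKb) (Real.rpow_pos_of_pos hD₂pos _)),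
    fun lam hlam hlt => ⟨part_i, part_ii lam hlam hlt, ?_⟩⟩
  intro X Y X' Y' hX hY hX' hY' h h'
  obtain ⟨hX'gt, hD₂lt⟩ := part_ii lam hlam hlt X' Y' hX' hY' h'
  exact ((part_i X Y hX hY h).trans hD₂lt).trans hX'gt
end

section
/- Let δ, p, q, α be real numbers with 0<δ<1, 2≤p<q and q<α+1, and let c_a>0, c_b>0 be real constants. Then there exists λ₀>0 such that for every λ with 0<λ<λ₀ there exist no reals s>0, X>0, Y≥0 satisfying all of: X+Y ≥ min(s^p, s^q); (α+1−p)·X + (α+1−q)·Y ≤ (α+δ)·c_a·s^{1−δ}; and (p+δ−1)·X + (q+δ−1)·Y ≤ λ·(α+δ)·c_b·s^{α+1}. -/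
/-!
Both constraints bound `T = X + Y` from above: `T ≲ s^(1-δ)` and `T ≲ λ s^(α+1)`, while
`T ≥ min(s^p, s^q)`. For `s ≥ 1` the first bound against `s^p` confines `s` to a bounded
interval `[1, M]`; then `s^p ≲ λ s^(α+1)` forces `λ ≳ M^(p-α-1)`. For `s < 1`,
`s^q ≲ λ s^(α+1)` forces `λ` to be bounded below as well, since `q < α + 1`.
-/

open Real

lemma add_le_div_of_mul_add_mul_le {a b c X Y R : ℝ} (hc : 0 < c) (hca : c ≤ a) (hcb : c ≤ b)
    (hX : 0 ≤ X) (hY : 0 ≤ Y) (h : a * X + b * Y ≤ R) : X + Y ≤ R / c := by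
  rw [le_div_iff₀' hc]
  nlinarith

lemma one_le_mul_rpow_sub_of_rpow_le_mul_rpow {s C a b : ℝ} (hs : 0 < s)
    (h : s ^ a ≤ C * s ^ b) : 1 ≤ C * s ^ (b - a) := by
  rwa [rpow_sub hs, ← mul_div_assoc, one_le_div (rpow_pos_of_pos hs a)]

lemma le_rpow_inv_of_rpow_le_mul_rpow {s A a b : ℝ} (hs : 0 < s) (hba : b < a)
    (h : s ^ a ≤ A * s ^ b) : s ≤ A ^ (a - b)⁻¹ := by
  have hpow : s ^ (a - b) ≤ A := by
    rwa [rpow_sub hs, div_le_iff₀ (rpow_pos_of_pos hs b)]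
  calc s = (s ^ (a - b)) ^ (a - b)⁻¹ := by
        rw [← rpow_mul hs.le, mul_inv_cancel₀ (sub_pos.2 hba).ne', rpow_one]
    _ ≤ A ^ (a - b)⁻¹ := rpow_le_rpow (by positivity) hpow (inv_nonneg.2 (sub_pos.2 hba).le)

lemma one_le_mul_rpow_of_rpow_bounds {p q σ γ A B lam s T : ℝ}
    (hσp : σ < p) (hpq : p ≤ q) (hqγ : q ≤ γ) (hlam : 0 ≤ lam) (hB : 0 ≤ B) (hs : 0 < s) (hmin : min (s ^ p) (s ^ q) ≤ T)
    (hTA : T ≤ A * s ^ σ) (hTB : T ≤ lam * B * s ^ γ) :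
    1 ≤ lam * B * max 1 (A ^ (p - σ)⁻¹) ^ (γ - p) := by
  have hlamB : 0 ≤ lam * B := mul_nonneg hlam hB
  have hM : 1 ≤ max 1 (A ^ (p - σ)⁻¹) ^ (γ - p) :=
    one_le_rpow (le_max_left _ _) (by linarith)
  rcases le_or_gt 1 s with h1s | hs1
  · have hsp : s ^ p ≤ T := by
      rwa [min_eq_left (rpow_le_rpow_of_exponent_le h1s hpq)] at hmin
    have hsM : s ≤ max 1 (A ^ (p - σ)⁻¹) :=
      (le_rpow_inv_of_rpow_le_mul_rpow hs hσp (hsp.trans hTA)).trans (le_max_right _ _)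
    calc 1 ≤ lam * B * s ^ (γ - p) :=
          one_le_mul_rpow_sub_of_rpow_le_mul_rpow hs (hsp.trans hTB)
      _ ≤ lam * B * max 1 (A ^ (p - σ)⁻¹) ^ (γ - p) := by
          gcongr
          linarith
  · have hsq : s ^ q ≤ T := by
      rwa [min_eq_right (rpow_le_rpow_of_exponent_ge hs hs1.le hpq)] at hmin
    calc 1 ≤ lam * B * s ^ (γ - q) :=
          one_le_mul_rpow_sub_of_rpow_le_mul_rpow hs (hsq.trans hTB)
      _ ≤ lam * B * 1 := by
          gcongr
          exact rpow_le_one hs.le hs1.le (by linarith)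
      _ ≤ lam * B * max 1 (A ^ (p - σ)⁻¹) ^ (γ - p) := by gcongr

theorem statement12_general
    (δ p q α ca cb : ℝ)
    (hδ0 : 0 < δ)
    (hp : 2 ≤ p) (hpq : p < q) (hq : q < α + 1)
    (hcb : 0 < cb) :
    ∃ lam₀ : ℝ, 0 < lam₀ ∧
      ∀ lam : ℝ, 0 < lam → lam < lam₀ →
        ¬ ∃ s X Y : ℝ, 0 < s ∧ 0 < X ∧ 0 ≤ Y ∧
          min (s ^ p) (s ^ q) ≤ X + Y ∧
          (α + 1 - p) * X + (α + 1 - q) * Y ≤ (α + δ) * ca * s ^ (1 - δ) ∧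
          (p + δ - 1) * X + (q + δ - 1) * Y
            ≤ lam * (α + δ) * cb * s ^ (α + 1) := by
  set A := (α + δ) * ca / (α + 1 - q)
  set B := (α + δ) * cb / (p + δ - 1)
  have hB : 0 < B := div_pos (mul_pos (by linarith) hcb) (by linarith)
  set M := max 1 (A ^ (p - (1 - δ))⁻¹)
  have hMB : 0 < B * M ^ (α + 1 - p) :=
    mul_pos hB (rpow_pos_of_pos (one_pos.trans_le (le_max_left _ _)) _)
  refine ⟨(B * M ^ (α + 1 - p))⁻¹, inv_pos.2 hMB, fun lam hlam hlam₀ => ?_⟩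
  rintro ⟨s, X, Y, hs, hX, hY, hmin, hXYa, hXYb⟩
  have hTA : X + Y ≤ A * s ^ (1 - δ) :=
    (add_le_div_of_mul_add_mul_le (by linarith) (by linarith) le_rfl hX.le hY hXYa).trans_eq
      (by ring)
  have hTB : X + Y ≤ lam * B * s ^ (α + 1) :=
    (add_le_div_of_mul_add_mul_le (by linarith) le_rfl (by linarith) hX.le hY hXYb).trans_eq
      (by ring)
  have hbound := one_le_mul_rpow_of_rpow_bounds (by linarith) hpq.le hq.le hlam.le hB.le hs
    hmin hTA hTB
  have hlt : lam * (B * M ^ (α + 1 - p)) < 1 := by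
    rwa [← lt_div_iff₀ hMB, one_div]
  linarith [mul_assoc lam B (M ^ (α + 1 - p))]

/-- the arithmetic core of the emptiness of the degenerate
Nehari set `M_λ⁰` for small `λ`: there is `λ₀ > 0` such that for every
`0 < λ < λ₀` no `s > 0`, `X > 0`, `Y ≥ 0` satisfy simultaneously
`X+Y ≥ min(s^p, s^q)`,
`(α+1−p)X+(α+1−q)Y ≤ (α+δ)c_a s^{1−δ}` and
`(p+δ−1)X+(q+δ−1)Y ≤ λ(α+δ)c_b s^{α+1}`. -/
theorem statement12
    (δ p q α ca cb : ℝ)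
    (hδ0 : 0 < δ) (hδ1 : δ < 1)
    (hp : 2 ≤ p) (hpq : p < q) (hq : q < α + 1)
    (hca : 0 < ca) (hcb : 0 < cb) :
    ∃ lam₀ : ℝ, 0 < lam₀ ∧
      ∀ lam : ℝ, 0 < lam → lam < lam₀ →
        ¬ ∃ s X Y : ℝ, 0 < s ∧ 0 < X ∧ 0 ≤ Y ∧
          min (s ^ p) (s ^ q) ≤ X + Y ∧
          (α + 1 - p) * X + (α + 1 - q) * Y ≤ (α + δ) * ca * s ^ (1 - δ) ∧
          (p + δ - 1) * X + (q + δ - 1) * Y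
            ≤ lam * (α + δ) * cb * s ^ (α + 1) :=
  statement12_general δ p q α ca cb hδ0 hp hpq hq hcb
end
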